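/- arXiv:1108.4131 — 10 statements merged into one kernel-verified Lean document; each statement's English description precedes it below -/
import Mathlib

section
/- If μ is an ergodic shift-invariant Borel probability measure on the full shift Σ_m = {0,...,m-1}^ℕ with continuous functions f₁, f₂ : Σ_m → ℝ, and if for μ-almost every x the limit lim_{n→∞} (1/n) Σ_{k=1}^n f₁(T^k x) f₂(T^{2k} x) exists and equals α, then α = (∫ f₁ dμ)·(∫ f₂ dμ). -/
/-!
Integrating the almost everywhere convergent averages (dominated convergence; the terms are
bounded because `Σ_m` is compact) shows that `α` is the limit of the Cesàro means of
`∫ f₁ ∘ Tᵏ · f₂ ∘ T²ᵏ dμ = ∫ f₁ · f₂ ∘ Tᵏ dμ`. These are inner products `⟪f₁, Uᵏ (f₂ ∘ T)⟫` for the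
Koopman operator `U` on `L²(μ)`. By von Neumann's mean ergodic theorem their means converge to
`⟪f₁, P (f₂ ∘ T)⟫`, where `P` is the projection onto the fixed vectors of `U`; by ergodicity these
are the constants, so `P (f₂ ∘ T) = ∫ f₂ dμ`.
-/

open MeasureTheory Filter Finset

/-- The shift map on `Σ_m = {0,...,m-1}^ℕ`. -/
def shift {m : ℕ} (x : ℕ → Fin m) : ℕ → Fin m := fun n => x (n + 1)

open Function
open scoped Topology

theorem abs_inv_mul_sum_Icc_le {a : ℕ → ℝ} {C : ℝ} (ha : ∀ k, |a k| ≤ C) (n : ℕ) :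
    |(n : ℝ)⁻¹ * ∑ k ∈ Icc 1 n, a k| ≤ C := by
  rcases n.eq_zero_or_pos with rfl | hn
  · simpa using (abs_nonneg _).trans (ha 0)
  rw [abs_mul, abs_inv, Nat.abs_cast, inv_mul_le_iff₀ (by positivity)]
  calc |∑ k ∈ Icc 1 n, a k| ≤ ∑ k ∈ Icc 1 n, |a k| := abs_sum_le_sum_abs _ _
    _ ≤ ∑ _k ∈ Icc 1 n, C := sum_le_sum fun k _ => ha k
    _ = n * C := by simp

section

variable {α : Type*} [MeasurableSpace α] {μ : Measure α} {T : α → α}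

theorem MeasureTheory.tendsto_avg_integral_of_ae_tendsto_avg [IsProbabilityMeasure μ]
    {φ : ℕ → α → ℝ} {C c : ℝ}
    (hφ : ∀ k, AEStronglyMeasurable (φ k) μ) (hC : ∀ k x, |φ k x| ≤ C)
    (h : ∀ᵐ x ∂μ, Tendsto (fun n : ℕ => (n : ℝ)⁻¹ * ∑ k ∈ Icc 1 n, φ k x) atTop (𝓝 c)) :
    Tendsto (fun n : ℕ => (n : ℝ)⁻¹ * ∑ k ∈ Icc 1 n, ∫ x, φ k x ∂μ) atTop (𝓝 c) := by
  have hint k : Integrable (φ k) μ := .of_bound (hφ k) C (.of_forall (hC k))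
  have hdom := tendsto_integral_of_dominated_convergence (μ := μ)
    (F := fun (n : ℕ) x => (n : ℝ)⁻¹ * ∑ k ∈ Icc 1 n, φ k x) (f := fun _ => c) (fun _ => C)
    (fun n => ((Icc 1 n).aestronglyMeasurable_fun_sum fun k _ => hφ k).const_mul _)
    (integrable_const C) (fun n => .of_forall fun x => abs_inv_mul_sum_Icc_le (hC · x) n) h
  simpa only [integral_const_mul, integral_finsetSum _ fun k _ => hint k, integral_const,
    probReal_univ, one_smul] using hdom

theorem MeasureTheory.MeasurePreserving.integral_comp_of_aestronglyMeasurable {β : Type*}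
    [MeasurableSpace β] {ν : Measure β} {φ : α → β} (hφ : MeasurePreserving φ μ ν) {g : β → ℝ}
    (hg : AEStronglyMeasurable g ν) : ∫ x, g (φ x) ∂μ = ∫ y, g y ∂ν := by
  rw [← hφ.map_eq] at hg ⊢
  exact (integral_map hφ.measurable.aemeasurable hg).symm

theorem MeasureTheory.MeasurePreserving.integral_comp_iterate_mul_comp_iterate_two_mul
    (hT : MeasurePreserving T μ μ) {k : ℕ} {f g : α → ℝ}
    (hfg : AEStronglyMeasurable (fun x => f x * g (T^[k] x)) μ) :
    ∫ x, f (T^[k] x) * g (T^[2 * k] x) ∂μ = ∫ x, f x * g (T^[k] x) ∂μ := by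
  simp_rw [two_mul, iterate_add_apply]
  exact (hT.iterate k).integral_comp_of_aestronglyMeasurable hfg

noncomputable def MeasureTheory.koopman (hT : MeasurePreserving T μ μ) :
    Lp ℝ 2 μ →L[ℝ] Lp ℝ 2 μ :=
  (Lp.compMeasurePreservingₗᵢ ℝ T hT).toContinuousLinearMap

theorem MeasureTheory.norm_koopman_le (hT : MeasurePreserving T μ μ) : ‖koopman hT‖ ≤ 1 :=
  LinearIsometry.norm_toContinuousLinearMap_le _

theorem MeasureTheory.koopman_iterate_ae_eq (hT : MeasurePreserving T μ μ) (k : ℕ)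
    (g : Lp ℝ 2 μ) : ⇑((koopman hT)^[k] g) =ᵐ[μ] g ∘ T^[k] := by
  have : (⇑(koopman hT))^[k] = (Lp.compMeasurePreserving T hT)^[k] := rfl
  rw [this, Lp.compMeasurePreserving_iterate]
  exact Lp.coeFn_compMeasurePreserving g _

theorem MeasureTheory.koopman_const [IsFiniteMeasure μ] (hT : MeasurePreserving T μ μ) (c : ℝ) :
    koopman hT (Lp.const 2 μ c) = Lp.const 2 μ c :=
  rfl

theorem Ergodic.exists_ae_eq_const_of_koopman_eq (h : Ergodic T μ) {g : Lp ℝ 2 μ}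
    (hg : koopman h.toMeasurePreserving g = g) : ∃ c, g =ᵐ[μ] const α c := by
  refine h.ae_eq_const_of_ae_eq_comp_ae (Lp.aestronglyMeasurable g) ?_
  simpa [hg] using (koopman_iterate_ae_eq h.toMeasurePreserving 1 g).symm

theorem MeasureTheory.L2.real_inner_eq_integral_of_ae_eq {F H : Lp ℝ 2 μ} {f h : α → ℝ}
    (hF : F =ᵐ[μ] f) (hH : H =ᵐ[μ] h) : inner ℝ F H = ∫ x, f x * h x ∂μ := by
  rw [L2.inner_def]
  refine integral_congr_ae ?_
  filter_upwards [hF, hH] with x hFx hHx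
  simp [hFx, hHx, mul_comm]

theorem Ergodic.starProjection_eqLocus_koopman [IsProbabilityMeasure μ] (h : Ergodic T μ)
    (g : Lp ℝ 2 μ) :
    ((koopman h.toMeasurePreserving).eqLocus (1 : Lp ℝ 2 μ →L[ℝ] Lp ℝ 2 μ)).starProjection g =
      Lp.const 2 μ (∫ x, g x ∂μ) := by
  refine Submodule.eq_starProjection_of_mem_of_inner_eq_zero
    (koopman_const h.toMeasurePreserving _) fun w hw => ?_
  obtain ⟨c, hc⟩ := h.exists_ae_eq_const_of_koopman_eq hw
  rw [inner_sub_left, L2.real_inner_eq_integral_of_ae_eq (.refl _ _) hc,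
    L2.real_inner_eq_integral_of_ae_eq (Lp.coeFn_const 2 μ _) hc]
  simp [integral_mul_const]

theorem Ergodic.tendsto_avg_integral_mul_comp_iterate [IsProbabilityMeasure μ] (h : Ergodic T μ)
    {f g : α → ℝ} (hf : MemLp f 2 μ) (hg : MemLp g 2 μ) :
    Tendsto (fun n : ℕ => (n : ℝ)⁻¹ * ∑ k ∈ range n, ∫ x, f x * g (T^[k] x) ∂μ) atTop
      (𝓝 ((∫ x, f x ∂μ) * ∫ x, g x ∂μ)) := by
  set U := koopman h.toMeasurePreserving
  have hinner (n : ℕ) : inner ℝ (hf.toLp f) (birkhoffAverage ℝ U id n (hg.toLp g)) =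
      (n : ℝ)⁻¹ * ∑ k ∈ range n, ∫ x, f x * g (T^[k] x) ∂μ := by
    rw [birkhoffAverage, birkhoffSum, real_inner_smul_right, inner_sum]
    congr 1
    refine sum_congr rfl fun k _ => L2.real_inner_eq_integral_of_ae_eq hf.coeFn_toLp ?_
    exact (koopman_iterate_ae_eq _ k _).trans
      ((h.toMeasurePreserving.iterate k).quasiMeasurePreserving.ae_eq_comp hg.coeFn_toLp)
  have hlimit : inner ℝ (hf.toLp f) (Lp.const 2 μ (∫ x, g x ∂μ)) =
      (∫ x, f x ∂μ) * ∫ x, g x ∂μ := by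
    rw [L2.real_inner_eq_integral_of_ae_eq hf.coeFn_toLp (Lp.coeFn_const 2 μ _)]
    exact integral_mul_const _ _
  have hmean := U.tendsto_birkhoffAverage_orthogonalProjection (norm_koopman_le _) (hg.toLp g)
  rw [← Submodule.starProjection_apply, h.starProjection_eqLocus_koopman,
    integral_congr_ae hg.coeFn_toLp] at hmean
  simpa only [hinner, hlimit] using
    (tendsto_const_nhds (x := hf.toLp f)).inner (𝕜 := ℝ) hmean

theorem Ergodic.tendsto_avg_Icc_integral_mul_comp_iterate [IsProbabilityMeasure μ]
    (h : Ergodic T μ) {f g : α → ℝ} (hf : MemLp f 2 μ) (hg : MemLp g 2 μ) :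
    Tendsto (fun n : ℕ => (n : ℝ)⁻¹ * ∑ k ∈ Icc 1 n, ∫ x, f x * g (T^[k] x) ∂μ) atTop
      (𝓝 ((∫ x, f x ∂μ) * ∫ x, g x ∂μ)) := by
  have hT := h.toMeasurePreserving
  have := h.tendsto_avg_integral_mul_comp_iterate hf (hg.comp_measurePreserving hT)
  rw [comp_def, hT.integral_comp_of_aestronglyMeasurable hg.aestronglyMeasurable] at this
  refine this.congr fun n => ?_
  rw [← Ico_add_one_right_eq_Icc, ← Finset.sum_Ico_add' _ 0 n 1, ← range_eq_Ico]
  simp only [← iterate_succ_apply' T]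

end

theorem continuous_shift {m : ℕ} : Continuous (shift : (ℕ → Fin m) → ℕ → Fin m) :=
  continuous_pi fun n => continuous_apply (n + 1)

theorem ergodic_multiple_average_eq_product_of_integrals_general
    (m : ℕ) (μ : Measure (ℕ → Fin m)) [IsProbabilityMeasure μ]
    (hμ : Ergodic shift μ)
    (f₁ f₂ : (ℕ → Fin m) → ℝ) (hf₁ : Continuous f₁) (hf₂ : Continuous f₂)
    (α : ℝ)
    (h : ∀ᵐ x ∂μ, Tendsto
      (fun n : ℕ => (n : ℝ)⁻¹ * ∑ k ∈ Icc 1 n, f₁ (shift^[k] x) * f₂ (shift^[2 * k] x))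
      atTop (nhds α)) :
    α = (∫ x, f₁ x ∂μ) * (∫ x, f₂ x ∂μ) := by
  obtain ⟨C₁, hC₁⟩ : ∃ C, ∀ x, |f₁ x| ≤ C := by
    simpa using isCompact_univ.exists_bound_of_continuousOn hf₁.continuousOn
  obtain ⟨C₂, hC₂⟩ : ∃ C, ∀ x, |f₂ x| ≤ C := by
    simpa using isCompact_univ.exists_bound_of_continuousOn hf₂.continuousOn
  have hcont k : Continuous fun x => f₁ (shift^[k] x) * f₂ (shift^[2 * k] x) :=
    (hf₁.comp (continuous_shift.iterate k)).mul (hf₂.comp (continuous_shift.iterate (2 * k)))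
  have hbound k x : |f₁ (shift^[k] x) * f₂ (shift^[2 * k] x)| ≤ C₁ * C₂ :=
    (abs_mul _ _).trans_le <|
      mul_le_mul (hC₁ _) (hC₂ _) (abs_nonneg _) ((abs_nonneg _).trans (hC₁ x))
  have hlim := tendsto_avg_integral_of_ae_tendsto_avg (fun k => (hcont k).aestronglyMeasurable)
    hbound h
  simp_rw [hμ.toMeasurePreserving.integral_comp_iterate_mul_comp_iterate_two_mul
    (hf₁.mul (hf₂.comp (continuous_shift.iterate _))).aestronglyMeasurable] at hlim
  exact tendsto_nhds_unique hlim <| hμ.tendsto_avg_Icc_integral_mul_comp_iterate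
    (ContinuousMap.memLp μ ℝ ⟨f₁, hf₁⟩) (ContinuousMap.memLp μ ℝ ⟨f₂, hf₂⟩)

/-- If `μ` is an ergodic shift-invariant Borel probability measure on `Σ_m` and `f₁, f₂` are
continuous, and for `μ`-a.e. `x` the multiple ergodic average
`(1/n) ∑_{k=1}^n f₁(T^k x) f₂(T^{2k} x)` converges to `α`, then `α = ∫f₁ dμ · ∫f₂ dμ`. -/
theorem ergodic_multiple_average_eq_product_of_integrals
    (m : ℕ) (hm : 2 ≤ m) (μ : Measure (ℕ → Fin m)) [IsProbabilityMeasure μ]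
    (hμ : Ergodic shift μ)
    (f₁ f₂ : (ℕ → Fin m) → ℝ) (hf₁ : Continuous f₁) (hf₂ : Continuous f₂)
    (α : ℝ)
    (h : ∀ᵐ x ∂μ, Tendsto
      (fun n : ℕ => (n : ℝ)⁻¹ * ∑ k ∈ Icc 1 n, f₁ (shift^[k] x) * f₂ (shift^[2 * k] x))
      atTop (nhds α)) :
    α = (∫ x, f₁ x ∂μ) * (∫ x, f₂ x ∂μ) :=
  ergodic_multiple_average_eq_product_of_integrals_general m μ hμ f₁ f₂ hf₁ hf₂ α h
end

section
/- Fix m ≥ 2, a function φ : S × S → ℝ with S = {0,...,m-1}, and s ∈ ℝ. The system of equations t_i² = Σ_{j=0}^{m-1} e^{s φ(i,j)} t_j, for i = 0,...,m-1, admits a solution (t₀,...,t_{m-1}) with all components strictly positive. -/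
open Finset

/-- The nonlinear transfer system `t_i² = ∑_j e^{sφ(i,j)} t_j` admits a strictly positive
solution. -/
theorem transfer_system_exists_pos_solution
    (m : ℕ) (hm : 2 ≤ m) (φ : Fin m → Fin m → ℝ) (s : ℝ) :
    ∃ t : Fin m → ℝ, (∀ i, 0 < t i) ∧
      ∀ i, (t i) ^ 2 = ∑ j, Real.exp (s * φ i j) * t j := by
  have hne : Nonempty (Fin m) := ⟨⟨0, by omega⟩⟩
  set E : Fin m → Fin m → ℝ := fun i j => Real.exp (s * φ i j) with hE
  have hEpos : ∀ i j, 0 < E i j := fun i j => Real.exp_pos _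
  set T : Fin m → ℝ := fun i => ∑ j, E i j with hT
  have hTpos : ∀ i, 0 < T i := fun i =>
    Finset.sum_pos (fun j _ => hEpos i j) univ_nonempty
  set A : ℝ := univ.inf' univ_nonempty T with hA
  set B : ℝ := univ.sup' univ_nonempty T with hB
  have hApos : 0 < A := by
    obtain ⟨i, _, hi⟩ := Finset.exists_mem_eq_inf' univ_nonempty T
    rw [hA, hi]; exact hTpos i
  have hAT : ∀ i, A ≤ T i := fun i => Finset.inf'_le _ (mem_univ i)
  have hTB : ∀ i, T i ≤ B := fun i => Finset.le_sup' _ (mem_univ i)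
  have hAB : A ≤ B := (hAT (Classical.arbitrary _)).trans (hTB _)
  have hBpos : 0 < B := hApos.trans_le hAB
  haveI : Fact (A ≤ B) := ⟨hAB⟩
  -- the operator on the cube
  have hmem : ∀ t : Fin m → Set.Icc A B, ∀ i,
      Real.sqrt (∑ j, E i j * ((t j : ℝ))) ∈ Set.Icc A B := by
    intro t i
    have hlow : A * T i ≤ ∑ j, E i j * (t j : ℝ) := by
      rw [Finset.mul_sum]
      refine Finset.sum_le_sum fun j _ => ?_
      rw [mul_comm A (E i j)]
      exact mul_le_mul_of_nonneg_left (t j).2.1 (hEpos i j).le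
    have hhigh : (∑ j, E i j * (t j : ℝ)) ≤ B * T i := by
      rw [Finset.mul_sum]
      refine Finset.sum_le_sum fun j _ => ?_
      rw [mul_comm B (E i j)]
      exact mul_le_mul_of_nonneg_left (t j).2.2 (hEpos i j).le
    constructor
    · have h1 : A * A ≤ ∑ j, E i j * (t j : ℝ) :=
        le_trans (mul_le_mul_of_nonneg_left (hAT i) hApos.le) hlow
      have := Real.sqrt_le_sqrt h1
      rwa [show A * A = A ^ 2 by ring, Real.sqrt_sq hApos.le] at this
    · have h1 : (∑ j, E i j * (t j : ℝ)) ≤ B * B :=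
        hhigh.trans (mul_le_mul_of_nonneg_left (hTB i) hBpos.le)
      have := Real.sqrt_le_sqrt h1
      rwa [show B * B = B ^ 2 by ring, Real.sqrt_sq hBpos.le] at this
  set F : (Fin m → Set.Icc A B) → (Fin m → Set.Icc A B) :=
    fun t i => ⟨Real.sqrt (∑ j, E i j * ((t j : ℝ))), hmem t i⟩ with hF
  have hmono : Monotone F := by
    intro t t' htt' i
    show Real.sqrt _ ≤ Real.sqrt _
    apply Real.sqrt_le_sqrt
    exact Finset.sum_le_sum fun j _ =>
      mul_le_mul_of_nonneg_left (htt' j) (hEpos i j).le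
  set u : Fin m → Set.Icc A B := OrderHom.lfp ⟨F, hmono⟩ with hu
  have hfix : F u = u := OrderHom.map_lfp ⟨F, hmono⟩
  refine ⟨fun i => (u i : ℝ), fun i => hApos.trans_le (u i).2.1, fun i => ?_⟩
  have hi : Real.sqrt (∑ j, E i j * ((u j : ℝ))) = (u i : ℝ) := by
    have := congrFun hfix i
    exact congrArg Subtype.val this
  have hnn : 0 ≤ ∑ j, E i j * ((u j : ℝ)) :=
    Finset.sum_nonneg fun j _ =>
      mul_nonneg (hEpos i j).le ((hApos.trans_le (u j).2.1).le)
  show ((u i : ℝ)) ^ 2 = ∑ j, E i j * ((u j : ℝ))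
  rw [← hi, Real.sq_sqrt hnn]
end

section
/- Fix m ≥ 2, φ : S × S → ℝ, and s ∈ ℝ. The system t_i² = Σ_{j=0}^{m-1} e^{s φ(i,j)} t_j (i ∈ S) has at most one solution with all components strictly positive. -/
open Finset

/-- The nonlinear transfer system `t_i² = ∑_j e^{sφ(i,j)} t_j` has at most one strictly
positive solution. -/
theorem transfer_system_unique_pos_solution
    (m : ℕ) (hm : 2 ≤ m) (φ : Fin m → Fin m → ℝ) (s : ℝ)
    (t t' : Fin m → ℝ)
    (ht : ∀ i, 0 < t i) (ht' : ∀ i, 0 < t' i)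
    (heq : ∀ i, (t i) ^ 2 = ∑ j, Real.exp (s * φ i j) * t j)
    (heq' : ∀ i, (t' i) ^ 2 = ∑ j, Real.exp (s * φ i j) * t' j) :
    t = t' := by
  have key : ∀ (u v : Fin m → ℝ), (∀ i, 0 < u i) → (∀ i, 0 < v i) →
      (∀ i, (u i)^2 = ∑ j, Real.exp (s * φ i j) * u j) →
      (∀ i, (v i)^2 = ∑ j, Real.exp (s * φ i j) * v j) →
      ∀ i, v i ≤ u i := by
    intro u v hu hv hequ heqv
    have hne : (Finset.univ : Finset (Fin m)).Nonempty := ⟨⟨0, by omega⟩, mem_univ _⟩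
    obtain ⟨i0, _, hmax⟩ := Finset.exists_max_image univ (fun i => v i / u i) hne
    set c := v i0 / u i0 with hc
    have hcpos : 0 < c := div_pos (hv i0) (hu i0)
    have hle : ∀ j, v j ≤ c * u j := by
      intro j
      have h := hmax j (mem_univ j)
      calc v j = (v j / u j) * u j := (div_mul_cancel₀ (v j) (hu j).ne').symm
        _ ≤ c * u j := mul_le_mul_of_nonneg_right h (hu j).le
    have h1 : (v i0)^2 ≤ c * (u i0)^2 := by
      rw [heqv i0, hequ i0, Finset.mul_sum]
      apply Finset.sum_le_sum
      intro j _
      rw [← mul_assoc, mul_comm c, mul_assoc]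
      exact mul_le_mul_of_nonneg_left (hle j) (Real.exp_pos _).le
    have hv0 : v i0 = c * u i0 := (div_mul_cancel₀ (v i0) (hu i0).ne').symm
    have h2 : c ^ 2 * u i0 ^ 2 ≤ c * u i0 ^ 2 := by
      have : v i0 ^ 2 = c ^ 2 * u i0 ^ 2 := by rw [hv0]; ring
      linarith [h1, this]
    have h3 : c ^ 2 ≤ c := le_of_mul_le_mul_right h2 (pow_pos (hu i0) 2)
    have hc1 : c ≤ 1 := by nlinarith [hcpos, h3]
    intro i
    calc v i ≤ c * u i := hle i
      _ ≤ 1 * u i := mul_le_mul_of_nonneg_right hc1 (hu i).le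
      _ = u i := one_mul _
  funext i
  exact le_antisymm (key t' t ht' ht heq' heq i) (key t t' ht ht' heq heq' i)
end

section
/- For the nonlinear transfer system t_i(s)² = Σ_j e^{s φ(i,j)} t_j(s), the positive solution s ↦ (t_i(s))_i is a continuously differentiable (indeed real analytic) function of s ∈ ℝ. -/
/-!
Write `F(s, y) = y² - A(s) y`, where `A(s)ᵢⱼ = e^{sφ(i,j)}` or, more generally, any analytic family
of entrywise nonnegative matrices. Comparing a solution `y` with a positive solution `t` at an index
maximising `y i / t i` shows that positive solutions are unique; the same comparison, applied to
`|v| / t`, shows that the partial derivative `v ↦ 2 t v - A(s) v` at a positive solution is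
injective. The analytic implicit function theorem then gives an analytic local solution through
`(s₀, t s₀)`; it stays positive near `s₀`, so it coincides with `t`.
-/

open Finset Filter Topology Matrix
open scoped ContDiff

section ImplicitFunction

variable {𝕜 : Type*} [RCLike 𝕜]
  {E₁ : Type*} [NormedAddCommGroup E₁] [NormedSpace 𝕜 E₁] [CompleteSpace E₁]
  {E₂ : Type*} [NormedAddCommGroup E₂] [NormedSpace 𝕜 E₂] [CompleteSpace E₂]
  {F : Type*} [NormedAddCommGroup F] [NormedSpace 𝕜 F] [CompleteSpace F]

theorem analyticAt_of_unique_zero {f : E₁ × E₂ → F} {g : E₁ → E₂} {x : E₁} {L : E₂ ≃L[𝕜] F}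
    (hf : AnalyticAt 𝕜 f (x, g x)) (hfx : f (x, g x) = 0)
    (hL : HasFDerivAt (fun y => f (x, y)) (L : E₂ →L[𝕜] F) (g x))
    (huniq : ∃ U ∈ 𝓝 (g x), ∀ᶠ s in 𝓝 x, ∀ y ∈ U, f (s, y) = 0 → y = g s) :
    AnalyticAt 𝕜 g x := by
  obtain ⟨U, hU, huniq⟩ := huniq
  have hω : ContDiffAt 𝕜 ω f (x, g x) := hf.contDiffAt
  have hω0 : (ω : WithTop ℕ∞) ≠ 0 := by simp
  have hpartial : fderiv 𝕜 f (x, g x) ∘L .inr 𝕜 E₁ E₂ = L :=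
    (hf.differentiableAt.hasFDerivAt.comp (g x) (hasFDerivAt_prodMk_right x (g x))).unique hL
  have hinv : (fderiv 𝕜 f (x, g x) ∘L .inr 𝕜 E₁ E₂).IsInvertible := hpartial ▸ ⟨L, rfl⟩
  set ψ := hω.implicitFunction hω0 hinv
  have hψ : ContDiffAt 𝕜 ω ψ x := hω.contDiffAt_implicitFunction hω0 hinv
  have hψx : ψ x = g x := hω.implicitFunction_apply_self hω0 hinv
  have hψU : ∀ᶠ s in 𝓝 x, ψ s ∈ U := hψ.continuousAt.preimage_mem_nhds (hψx ▸ hU)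
  have hψg : ψ =ᶠ[𝓝 x] g := by
    filter_upwards [hω.eventually_apply_implicitFunction hω0 hinv, hψU, huniq]
      with s hs hsU hsuniq
    exact hsuniq _ hsU (hs.trans hfx)
  exact hψ.analyticAt.congr hψg

end ImplicitFunction

section QuadraticSystem

variable {ι : Type*} [Fintype ι]

theorem exists_eq_mul_and_le_mul [Nonempty ι] (w t : ι → ℝ) (ht : ∀ i, 0 < t i) :
    ∃ i₀, ∃ c : ℝ, w i₀ = c * t i₀ ∧ ∀ j, w j ≤ c * t j := by
  obtain ⟨i₀, -, hmax⟩ := exists_max_image univ (fun i => w i / t i) univ_nonempty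
  refine ⟨i₀, w i₀ / t i₀, (div_mul_cancel₀ _ (ht i₀).ne').symm, fun j => ?_⟩
  rw [← div_le_iff₀ (ht j)]
  exact hmax j (mem_univ j)

theorem mulVec_le_mul_mulVec {A : Matrix ι ι ℝ} (hA : ∀ i j, 0 ≤ A i j) {w t : ι → ℝ} {c : ℝ}
    (hw : ∀ j, w j ≤ c * t j) (i : ι) : (A *ᵥ w) i ≤ c * (A *ᵥ t) i := by
  simp only [mulVec, dotProduct, mul_sum]
  exact sum_le_sum fun j _ => by
    rw [mul_left_comm]
    exact mul_le_mul_of_nonneg_left (hw j) (hA i j)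

theorem le_of_sq_eq_mulVec {A : Matrix ι ι ℝ} (hA : ∀ i j, 0 ≤ A i j) {x y : ι → ℝ}
    (hy : ∀ i, 0 < y i) (hx2 : x ^ 2 = A *ᵥ x) (hy2 : y ^ 2 = A *ᵥ y) : x ≤ y := by
  intro i
  have : Nonempty ι := ⟨i⟩
  obtain ⟨i₀, c, hxc, hle⟩ := exists_eq_mul_and_le_mul x y hy
  have hc : c ^ 2 * y i₀ ^ 2 ≤ c * y i₀ ^ 2 := calc
    c ^ 2 * y i₀ ^ 2 = x i₀ ^ 2 := by rw [hxc]; ring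
    _ = (A *ᵥ x) i₀ := congrFun hx2 i₀
    _ ≤ c * (A *ᵥ y) i₀ := mulVec_le_mul_mulVec hA hle i₀
    _ = c * y i₀ ^ 2 := by rw [← hy2]; rfl
  have hc1 : c ≤ 1 := by nlinarith [le_of_mul_le_mul_right hc (pow_pos (hy i₀) 2)]
  exact (hle i).trans (mul_le_of_le_one_left (hy i).le hc1)

theorem eq_of_sq_eq_mulVec {A : Matrix ι ι ℝ} (hA : ∀ i j, 0 ≤ A i j) {x y : ι → ℝ}
    (hx : ∀ i, 0 < x i) (hy : ∀ i, 0 < y i) (hx2 : x ^ 2 = A *ᵥ x) (hy2 : y ^ 2 = A *ᵥ y) :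
    x = y :=
  le_antisymm (le_of_sq_eq_mulVec hA hy hx2 hy2) (le_of_sq_eq_mulVec hA hx hy2 hx2)

theorem eq_zero_of_two_mul_eq_mulVec {A : Matrix ι ι ℝ} (hA : ∀ i j, 0 ≤ A i j) {t v : ι → ℝ}
    (ht : ∀ i, 0 < t i) (ht2 : t ^ 2 = A *ᵥ t) (hv : 2 * t * v = A *ᵥ v) : v = 0 := by
  funext i
  have : Nonempty ι := ⟨i⟩
  obtain ⟨i₀, c, hvc, hle⟩ := exists_eq_mul_and_le_mul (|v|) t ht
  have hc : 2 * c * t i₀ ^ 2 ≤ c * t i₀ ^ 2 := calc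
    2 * c * t i₀ ^ 2 = |2 * t i₀ * v i₀| := by
      rw [abs_mul, abs_of_pos (by linarith [ht i₀]), ← Pi.abs_apply, hvc]; ring
    _ = |(A *ᵥ v) i₀| := by rw [← hv]; rfl
    _ ≤ (A *ᵥ |v|) i₀ := by
      simp only [mulVec, dotProduct, Pi.abs_apply]
      exact (abs_sum_le_sum_abs _ _).trans_eq (sum_congr rfl fun j _ => by
        rw [abs_mul, abs_of_nonneg (hA i₀ j)])
    _ ≤ c * (A *ᵥ t) i₀ := mulVec_le_mul_mulVec hA hle i₀
    _ = c * t i₀ ^ 2 := by rw [← ht2]; rfl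
  have hc0 : c ≤ 0 := by nlinarith [le_of_mul_le_mul_right hc (pow_pos (ht i₀) 2)]
  exact abs_nonpos_iff.mp ((hle i).trans (mul_nonpos_of_nonpos_of_nonneg hc0 (ht i).le))

noncomputable def fderivSqSubMulVec (M : Matrix ι ι ℝ) (t : ι → ℝ) : (ι → ℝ) →L[ℝ] ι → ℝ :=
  (LinearMap.mulLeft ℝ (2 * t) - M.mulVecLin).toContinuousLinearMap

theorem hasFDerivAt_sq_sub_mulVec (M : Matrix ι ι ℝ) (t : ι → ℝ) :
    HasFDerivAt (fun y : ι → ℝ => y ^ 2 - M *ᵥ y) (fderivSqSubMulVec M t) t := by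
  refine ((hasFDerivAt_pow 2).sub M.mulVecLin.toContinuousLinearMap.hasFDerivAt).congr_fderiv ?_
  ext
  simp [fderivSqSubMulVec, mul_assoc]

theorem fderivSqSubMulVec_injective {A : Matrix ι ι ℝ} (hA : ∀ i j, 0 ≤ A i j) {t : ι → ℝ}
    (ht : ∀ i, 0 < t i) (ht2 : t ^ 2 = A *ᵥ t) : Function.Injective (fderivSqSubMulVec A t) :=
  (injective_iff_map_eq_zero _).2 fun _ hv =>
    eq_zero_of_two_mul_eq_mulVec hA ht ht2 (sub_eq_zero.1 hv)

theorem analyticAt_sq_sub_mulVec {E : Type*} [NormedAddCommGroup E] [NormedSpace ℝ E]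
    {A : E → Matrix ι ι ℝ} {p : E × (ι → ℝ)} (hA : ∀ i j, AnalyticAt ℝ (fun s => A s i j) p.1) :
    AnalyticAt ℝ (fun q : E × (ι → ℝ) => q.2 ^ 2 - A q.1 *ᵥ q.2) p := by
  have hsnd : AnalyticAt ℝ (fun q : E × (ι → ℝ) => q.2) p := analyticAt_snd
  refine (hsnd.pow 2).sub (AnalyticAt.pi fun i => ?_)
  simp only [mulVec, dotProduct]
  exact analyticAt_fun_sum _ fun j _ =>
    ((hA i j).comp analyticAt_fst).mul (analyticAt_pi_iff.1 hsnd j)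

theorem analyticAt_of_sq_eq_mulVec {E : Type*} [NormedAddCommGroup E] [NormedSpace ℝ E]
    [CompleteSpace E] {A : E → Matrix ι ι ℝ} {t : E → ι → ℝ} {x : E}
    (hA : ∀ i j, AnalyticAt ℝ (fun s => A s i j) x) (hA0 : ∀ s i j, 0 ≤ A s i j)
    (ht : ∀ s i, 0 < t s i) (ht2 : ∀ s, t s ^ 2 = A s *ᵥ t s) : AnalyticAt ℝ t x := by
  set L := (LinearEquiv.ofInjectiveEndo _
    (fderivSqSubMulVec_injective (hA0 x) (ht x) (ht2 x))).toContinuousLinearEquiv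
  have hL : (L : (ι → ℝ) →L[ℝ] ι → ℝ) = fderivSqSubMulVec (A x) (t x) := by ext; rfl
  have hpos : ∀ᶠ y in 𝓝 (t x), ∀ i, 0 < y i := eventually_all.2 fun i =>
    continuousAt_const.eventually_lt (continuous_apply i).continuousAt (ht x i)
  refine analyticAt_of_unique_zero (L := L) (analyticAt_sq_sub_mulVec (p := (x, t x)) hA)
    (sub_eq_zero.2 (ht2 x)) (by rw [hL]; exact hasFDerivAt_sq_sub_mulVec (A x) (t x))
    ⟨_, hpos, Eventually.of_forall fun s y hy hy2 =>
      eq_of_sq_eq_mulVec (hA0 s) hy (ht s) (sub_eq_zero.1 hy2) (ht2 s)⟩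

end QuadraticSystem

theorem transfer_system_solution_smooth_general
    (m : ℕ) (φ : Fin m → Fin m → ℝ)
    (t : ℝ → Fin m → ℝ)
    (ht : ∀ s i, 0 < t s i)
    (heq : ∀ s i, (t s i) ^ 2 = ∑ j, Real.exp (s * φ i j) * t s j) :
    ContDiff ℝ 1 t ∧ AnalyticOn ℝ t Set.univ := by
  have hanalytic : AnalyticOnNhd ℝ t Set.univ := fun s _ =>
    analyticAt_of_sq_eq_mulVec (A := fun s i j => Real.exp (s * φ i j)) (fun i j => by fun_prop)
      (fun s i j => (Real.exp_pos _).le) ht (fun s => funext (heq s))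
  exact ⟨hanalytic.contDiff, hanalytic.analyticOn⟩

/-- The strictly positive solution `s ↦ (t_i(s))_i` of the transfer system
`t_i(s)² = ∑_j e^{sφ(i,j)} t_j(s)` is continuously differentiable, indeed real analytic,
as a function of `s`. -/
theorem transfer_system_solution_smooth
    (m : ℕ) (hm : 2 ≤ m) (φ : Fin m → Fin m → ℝ)
    (t : ℝ → Fin m → ℝ)
    (ht : ∀ s i, 0 < t s i)
    (heq : ∀ s i, (t s i) ^ 2 = ∑ j, Real.exp (s * φ i j) * t s j) :
    ContDiff ℝ 1 t ∧ AnalyticOn ℝ t Set.univ :=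
  transfer_system_solution_smooth_general m φ t ht heq
end

section
/- Define P(s) = log Σ_{i=0}^{m-1} t_i(s), where (t_i(s)) is the positive solution of t_i² = Σ_j e^{sφ(i,j)} t_j. Then P is a convex function of s, and if φ is not constant on S × S then P is strictly convex. -/
/-!
By Hölder's inequality the geometric interpolation `u i = t x i ^ a * t y i ^ b` is a
supersolution of the system at `s = a x + b y`: `∑ j, exp (s φ i j) u j ≤ u i ^ 2`.
Comparing with `t s` at an index where `t s / u` is maximal shows that supersolutions dominate
the solution, so `t s ≤ u`, and Hölder again gives `∑ t s ≤ (∑ t x) ^ a * (∑ t y) ^ b`: the sum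
is log-convex. Equality in both Hölder steps forces `t y = c • t x` and
`exp ((y - x) φ i j) = c` for all `i, j`, so for `x ≠ y` the potential `φ` is constant.
-/

open Finset Real

section Holder

variable {ι : Type*} [Fintype ι] [Nonempty ι] {f g : ι → ℝ} {a b : ℝ}

theorem sum_rpow_mul_rpow_eq_mul_sum_div (hf : ∀ j, 0 < f j) (hg : ∀ j, 0 < g j) :
    ∑ j, f j ^ a * g j ^ b =
      (∑ k, f k) ^ a * (∑ k, g k) ^ b * ∑ j, (f j / ∑ k, f k) ^ a * (g j / ∑ k, g k) ^ b := by
  have hF : 0 < ∑ k, f k := sum_pos (fun j _ => hf j) univ_nonempty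
  have hG : 0 < ∑ k, g k := sum_pos (fun j _ => hg j) univ_nonempty
  rw [mul_sum]
  refine sum_congr rfl fun j _ => ?_
  rw [div_rpow (hf j).le hF.le, div_rpow (hg j).le hG.le]
  have : (∑ k, f k) ^ a * (∑ k, g k) ^ b ≠ 0 := by positivity
  field_simp

theorem sum_mul_div_sum_add_mul_div_sum (hf : ∀ j, 0 < f j) (hg : ∀ j, 0 < g j)
    (hab : a + b = 1) : ∑ j, (a * (f j / ∑ k, f k) + b * (g j / ∑ k, g k)) = 1 := by
  have hF : 0 < ∑ k, f k := sum_pos (fun j _ => hf j) univ_nonempty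
  have hG : 0 < ∑ k, g k := sum_pos (fun j _ => hg j) univ_nonempty
  rw [sum_add_distrib, ← mul_sum, ← mul_sum, ← sum_div, ← sum_div, div_self hF.ne',
    div_self hG.ne', mul_one, mul_one, hab]

theorem sum_rpow_mul_rpow_le (hf : ∀ j, 0 < f j) (hg : ∀ j, 0 < g j) (ha : 0 ≤ a) (hb : 0 ≤ b)
    (hab : a + b = 1) : ∑ j, f j ^ a * g j ^ b ≤ (∑ j, f j) ^ a * (∑ j, g j) ^ b := by
  have hF : 0 < ∑ k, f k := sum_pos (fun j _ => hf j) univ_nonempty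
  have hG : 0 < ∑ k, g k := sum_pos (fun j _ => hg j) univ_nonempty
  rw [sum_rpow_mul_rpow_eq_mul_sum_div hf hg]
  refine mul_le_of_le_one_right (by positivity) ?_
  calc ∑ j, (f j / ∑ k, f k) ^ a * (g j / ∑ k, g k) ^ b
      ≤ ∑ j, (a * (f j / ∑ k, f k) + b * (g j / ∑ k, g k)) :=
        sum_le_sum fun j _ => geom_mean_le_arith_mean2_weighted ha hb
          (div_pos (hf j) hF).le (div_pos (hg j) hG).le hab
    _ = 1 := sum_mul_div_sum_add_mul_div_sum hf hg hab

theorem sum_rpow_mul_rpow_lt (hf : ∀ j, 0 < f j) (hg : ∀ j, 0 < g j) (ha : 0 < a) (hb : 0 < b)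
    (hab : a + b = 1) (hfg : ∃ j, f j / ∑ k, f k ≠ g j / ∑ k, g k) :
    ∑ j, f j ^ a * g j ^ b < (∑ j, f j) ^ a * (∑ j, g j) ^ b := by
  have hF : 0 < ∑ k, f k := sum_pos (fun j _ => hf j) univ_nonempty
  have hG : 0 < ∑ k, g k := sum_pos (fun j _ => hg j) univ_nonempty
  obtain ⟨j₀, hj₀⟩ := hfg
  rw [sum_rpow_mul_rpow_eq_mul_sum_div hf hg]
  refine mul_lt_of_lt_one_right (by positivity) ?_
  calc ∑ j, (f j / ∑ k, f k) ^ a * (g j / ∑ k, g k) ^ b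
      < ∑ j, (a * (f j / ∑ k, f k) + b * (g j / ∑ k, g k)) := by
        refine sum_lt_sum (fun j _ => geom_mean_le_arith_mean2_weighted ha.le hb.le
          (div_pos (hf j) hF).le (div_pos (hg j) hG).le hab) ⟨j₀, mem_univ _, ?_⟩
        exact (geom_mean_lt_arith_mean2_weighted_iff_of_pos ha hb
          (div_pos (hf j₀) hF).le (div_pos (hg j₀) hG).le hab).2 hj₀
    _ = 1 := sum_mul_div_sum_add_mul_div_sum hf hg hab

end Holder

section Comparison

variable {ι : Type*} [Fintype ι] {A : ι → ι → ℝ} {t u : ι → ℝ}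

theorem le_of_sq_le_sum_of_sum_le_sq (hA : ∀ i j, 0 ≤ A i j) (ht : ∀ i, 0 ≤ t i)
    (hu : ∀ i, 0 < u i) (hsub : ∀ i, t i ^ 2 ≤ ∑ j, A i j * t j)
    (hsup : ∀ i, ∑ j, A i j * u j ≤ u i ^ 2) (j : ι) : t j ≤ u j := by
  obtain ⟨i, -, hi⟩ := exists_max_image univ (fun k => t k / u k) ⟨j, mem_univ j⟩
  set c := t i / u i with hc
  have hle : ∀ k, t k ≤ c * u k := fun k => (div_le_iff₀ (hu k)).1 (hi k (mem_univ k))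
  have hc0 : 0 ≤ c := div_nonneg (ht i) (hu i).le
  have hsq : c ^ 2 * u i ^ 2 ≤ c * u i ^ 2 :=
    calc c ^ 2 * u i ^ 2 = t i ^ 2 := by
          rw [hc, div_pow, div_mul_cancel₀ _ (pow_pos (hu i) 2).ne']
      _ ≤ ∑ k, A i k * t k := hsub i
      _ ≤ ∑ k, A i k * (c * u k) :=
        sum_le_sum fun k _ => mul_le_mul_of_nonneg_left (hle k) (hA i k)
      _ = c * ∑ k, A i k * u k := by rw [mul_sum]; exact sum_congr rfl fun k _ => by ring
      _ ≤ c * u i ^ 2 := mul_le_mul_of_nonneg_left (hsup i) hc0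
  have hc1 : c ≤ 1 := by nlinarith [le_of_mul_le_mul_right hsq (pow_pos (hu i) 2)]
  exact (hle j).trans (mul_le_of_le_one_left (hu j).le hc1)

theorem lt_of_sq_le_sum_of_sum_lt_sq (hA : ∀ i j, 0 ≤ A i j) (ht : ∀ i, 0 ≤ t i)
    (hu : ∀ i, 0 < u i) (hsub : ∀ i, t i ^ 2 ≤ ∑ j, A i j * t j)
    (hsup : ∀ i, ∑ j, A i j * u j ≤ u i ^ 2) {i : ι} (hi : ∑ j, A i j * u j < u i ^ 2) :
    t i < u i := by
  refine lt_of_pow_lt_pow_left₀ 2 (hu i).le ?_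
  calc t i ^ 2 ≤ ∑ j, A i j * t j := hsub i
    _ ≤ ∑ j, A i j * u j := sum_le_sum fun j _ =>
        mul_le_mul_of_nonneg_left (le_of_sq_le_sum_of_sum_le_sq hA ht hu hsub hsup j) (hA i j)
    _ < u i ^ 2 := hi

end Comparison

section LogConvex

variable {E : Type*} [AddCommGroup E] [Module ℝ E] {s : Set E} {f : E → ℝ}

theorem log_rpow_mul_rpow {p q : ℝ} (hp : 0 < p) (hq : 0 < q) (a b : ℝ) :
    log (p ^ a * q ^ b) = a * log p + b * log q := by
  rw [log_mul (rpow_pos_of_pos hp a).ne' (rpow_pos_of_pos hq b).ne', log_rpow hp, log_rpow hq]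

theorem convexOn_log_of_le_rpow_mul_rpow (hs : Convex ℝ s) (hf : ∀ x ∈ s, 0 < f x)
    (h : ∀ x ∈ s, ∀ y ∈ s, ∀ a b : ℝ, 0 < a → 0 < b → a + b = 1 →
      f (a • x + b • y) ≤ f x ^ a * f y ^ b) :
    ConvexOn ℝ s fun x => log (f x) := by
  refine convexOn_iff_forall_pos.2 ⟨hs, fun x hx y hy a b ha hb hab => ?_⟩
  calc log (f (a • x + b • y)) ≤ log (f x ^ a * f y ^ b) :=
        log_le_log (hf _ (hs hx hy ha.le hb.le hab)) (h x hx y hy a b ha hb hab)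
    _ = a * log (f x) + b * log (f y) := log_rpow_mul_rpow (hf x hx) (hf y hy) a b

theorem strictConvexOn_log_of_lt_rpow_mul_rpow (hs : Convex ℝ s) (hf : ∀ x ∈ s, 0 < f x)
    (h : ∀ x ∈ s, ∀ y ∈ s, x ≠ y → ∀ a b : ℝ, 0 < a → 0 < b → a + b = 1 →
      f (a • x + b • y) < f x ^ a * f y ^ b) :
    StrictConvexOn ℝ s fun x => log (f x) := by
  refine ⟨hs, fun x hx y hy hxy a b ha hb hab => ?_⟩
  calc log (f (a • x + b • y)) < log (f x ^ a * f y ^ b) :=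
        log_lt_log (hf _ (hs hx hy ha.le hb.le hab)) (h x hx y hy hxy a b ha hb hab)
    _ = a * log (f x) + b * log (f y) := log_rpow_mul_rpow (hf x hx) (hf y hy) a b

end LogConvex

section TransferSystem

variable {ι : Type*} [Fintype ι] {φ : ι → ι → ℝ} {t : ℝ → ι → ℝ} {a b x y : ℝ}

theorem exp_mul_mul_rpow_mul_exp_mul_mul_rpow {p q : ℝ} (hp : 0 ≤ p) (hq : 0 ≤ q) (c : ℝ) :
    (exp (x * c) * p) ^ a * (exp (y * c) * q) ^ b =
      exp ((a * x + b * y) * c) * (p ^ a * q ^ b) := by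
  rw [mul_rpow (exp_pos _).le hp, mul_rpow (exp_pos _).le hq, ← exp_mul, ← exp_mul,
    add_mul, exp_add]
  ring_nf

theorem sum_exp_mul_rpow_mul_rpow_eq (ht : ∀ s i, 0 < t s i) (i : ι) :
    ∑ j, exp ((a * x + b * y) * φ i j) * (t x j ^ a * t y j ^ b) =
      ∑ j, (exp (x * φ i j) * t x j) ^ a * (exp (y * φ i j) * t y j) ^ b :=
  sum_congr rfl fun j _ =>
    (exp_mul_mul_rpow_mul_exp_mul_mul_rpow (ht x j).le (ht y j).le (φ i j)).symm

theorem rpow_mul_rpow_sq_eq (ht : ∀ s i, 0 < t s i)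
    (heq : ∀ s i, t s i ^ 2 = ∑ j, exp (s * φ i j) * t s j) (i : ι) :
    (t x i ^ a * t y i ^ b) ^ 2 =
      (∑ j, exp (x * φ i j) * t x j) ^ a * (∑ j, exp (y * φ i j) * t y j) ^ b := by
  rw [← heq, ← heq, mul_pow, rpow_pow_comm (ht x i).le, rpow_pow_comm (ht y i).le]

theorem sum_exp_mul_rpow_mul_rpow_le_sq [Nonempty ι] (ht : ∀ s i, 0 < t s i)
    (heq : ∀ s i, t s i ^ 2 = ∑ j, exp (s * φ i j) * t s j) (ha : 0 ≤ a) (hb : 0 ≤ b)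
    (hab : a + b = 1) (i : ι) :
    ∑ j, exp ((a * x + b * y) * φ i j) * (t x j ^ a * t y j ^ b) ≤
      (t x i ^ a * t y i ^ b) ^ 2 := by
  rw [sum_exp_mul_rpow_mul_rpow_eq ht, rpow_mul_rpow_sq_eq ht heq]
  exact sum_rpow_mul_rpow_le (fun j => mul_pos (exp_pos _) (ht x j))
    (fun j => mul_pos (exp_pos _) (ht y j)) ha hb hab

theorem sum_exp_mul_rpow_mul_rpow_lt_sq [Nonempty ι] (ht : ∀ s i, 0 < t s i)
    (heq : ∀ s i, t s i ^ 2 = ∑ j, exp (s * φ i j) * t s j) (ha : 0 < a) (hb : 0 < b)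
    (hab : a + b = 1) {i : ι}
    (hi : ∃ j, exp (x * φ i j) * t x j / t x i ^ 2 ≠ exp (y * φ i j) * t y j / t y i ^ 2) :
    ∑ j, exp ((a * x + b * y) * φ i j) * (t x j ^ a * t y j ^ b) <
      (t x i ^ a * t y i ^ b) ^ 2 := by
  rw [heq x i, heq y i] at hi
  rw [sum_exp_mul_rpow_mul_rpow_eq ht, rpow_mul_rpow_sq_eq ht heq]
  exact sum_rpow_mul_rpow_lt (fun j => mul_pos (exp_pos _) (ht x j))
    (fun j => mul_pos (exp_pos _) (ht y j)) ha hb hab hi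

theorem solution_le_rpow_mul_rpow [Nonempty ι] (ht : ∀ s i, 0 < t s i)
    (heq : ∀ s i, t s i ^ 2 = ∑ j, exp (s * φ i j) * t s j) (ha : 0 ≤ a) (hb : 0 ≤ b)
    (hab : a + b = 1) (i : ι) : t (a * x + b * y) i ≤ t x i ^ a * t y i ^ b :=
  le_of_sq_le_sum_of_sum_le_sq (fun _ _ => (exp_pos _).le) (fun j => (ht _ j).le)
    (fun j => mul_pos (rpow_pos_of_pos (ht x j) a) (rpow_pos_of_pos (ht y j) b))
    (fun j => (heq _ j).le) (sum_exp_mul_rpow_mul_rpow_le_sq ht heq ha hb hab) i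

theorem sum_solution_le_rpow_mul_rpow [Nonempty ι] (ht : ∀ s i, 0 < t s i)
    (heq : ∀ s i, t s i ^ 2 = ∑ j, exp (s * φ i j) * t s j) (ha : 0 ≤ a) (hb : 0 ≤ b)
    (hab : a + b = 1) : ∑ i, t (a * x + b * y) i ≤ (∑ i, t x i) ^ a * (∑ i, t y i) ^ b :=
  (sum_le_sum fun i _ => solution_le_rpow_mul_rpow ht heq ha hb hab i).trans
    (sum_rpow_mul_rpow_le (ht x) (ht y) ha hb hab)

theorem mul_sub_eq_log_of_forall_div_eq (ht : ∀ s i, 0 < t s i)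
    (hinner : ∀ i j, exp (x * φ i j) * t x j / t x i ^ 2 = exp (y * φ i j) * t y j / t y i ^ 2)
    (houter : ∀ i, t x i / ∑ k, t x k = t y i / ∑ k, t y k) (i j : ι) :
    φ i j * (y - x) = log ((∑ k, t y k) / ∑ k, t x k) := by
  have hF : 0 < ∑ k, t x k := sum_pos (fun k _ => ht x k) ⟨i, mem_univ i⟩
  have hG : 0 < ∑ k, t y k := sum_pos (fun k _ => ht y k) ⟨i, mem_univ i⟩
  set c := (∑ k, t y k) / ∑ k, t x k with hc
  have hc0 : 0 < c := div_pos hG hF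
  have hty : ∀ k, t y k = c * t x k := by
    intro k
    have h := houter k
    rw [div_eq_div_iff hF.ne' hG.ne'] at h
    rw [hc, div_mul_eq_mul_div, eq_div_iff hF.ne']
    linarith
  have hexp : exp (y * φ i j) = exp (x * φ i j) * c := by
    have h := hinner i j
    rw [hty j, hty i] at h
    field_simp [(ht x i).ne', (ht x j).ne'] at h
    rw [h, mul_comm y]
  have := congrArg log hexp
  rw [log_exp, log_mul (exp_pos _).ne' hc0.ne', log_exp] at this
  linarith

theorem sum_solution_lt_rpow_mul_rpow [Nonempty ι] (ht : ∀ s i, 0 < t s i)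
    (heq : ∀ s i, t s i ^ 2 = ∑ j, exp (s * φ i j) * t s j) (hφ : ∃ i j k l, φ i j ≠ φ k l)
    (hxy : x ≠ y) (ha : 0 < a) (hb : 0 < b) (hab : a + b = 1) :
    ∑ i, t (a * x + b * y) i < (∑ i, t x i) ^ a * (∑ i, t y i) ^ b := by
  have hle := solution_le_rpow_mul_rpow (x := x) (y := y) ht heq ha.le hb.le hab
  by_cases hinner :
      ∃ i j, exp (x * φ i j) * t x j / t x i ^ 2 ≠ exp (y * φ i j) * t y j / t y i ^ 2
  · obtain ⟨i, hi⟩ := hinner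
    have hlt : t (a * x + b * y) i < t x i ^ a * t y i ^ b :=
      lt_of_sq_le_sum_of_sum_lt_sq (fun _ _ => (exp_pos _).le) (fun j => (ht _ j).le)
        (fun j => mul_pos (rpow_pos_of_pos (ht x j) a) (rpow_pos_of_pos (ht y j) b))
        (fun j => (heq _ j).le) (sum_exp_mul_rpow_mul_rpow_le_sq ht heq ha.le hb.le hab)
        (sum_exp_mul_rpow_mul_rpow_lt_sq ht heq ha hb hab hi)
    calc ∑ i, t (a * x + b * y) i < ∑ i, t x i ^ a * t y i ^ b :=
          sum_lt_sum (fun i _ => hle i) ⟨i, mem_univ i, hlt⟩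
      _ ≤ (∑ i, t x i) ^ a * (∑ i, t y i) ^ b :=
          sum_rpow_mul_rpow_le (ht x) (ht y) ha.le hb.le hab
  by_cases houter : ∃ i, t x i / ∑ k, t x k ≠ t y i / ∑ k, t y k
  · calc ∑ i, t (a * x + b * y) i ≤ ∑ i, t x i ^ a * t y i ^ b := sum_le_sum fun i _ => hle i
      _ < (∑ i, t x i) ^ a * (∑ i, t y i) ^ b :=
          sum_rpow_mul_rpow_lt (ht x) (ht y) ha hb hab houter
  push Not at hinner houter
  obtain ⟨i, j, k, l, hne⟩ := hφ
  refine absurd (mul_right_cancel₀ (sub_ne_zero.2 hxy.symm) ?_) hne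
  rw [mul_sub_eq_log_of_forall_div_eq ht hinner houter,
    mul_sub_eq_log_of_forall_div_eq ht hinner houter]

theorem convexOn_log_sum (ht : ∀ s i, 0 < t s i)
    (heq : ∀ s i, t s i ^ 2 = ∑ j, exp (s * φ i j) * t s j) :
    ConvexOn ℝ Set.univ fun s => log (∑ i, t s i) := by
  cases isEmpty_or_nonempty ι with
  | inl _ => simpa only [univ_eq_empty, sum_empty, log_zero] using convexOn_const 0 convex_univ
  | inr _ =>
    exact convexOn_log_of_le_rpow_mul_rpow convex_univ
      (fun s _ => sum_pos (fun i _ => ht s i) univ_nonempty)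
      fun x _ y _ a b ha hb hab => sum_solution_le_rpow_mul_rpow ht heq ha.le hb.le hab

theorem strictConvexOn_log_sum (ht : ∀ s i, 0 < t s i)
    (heq : ∀ s i, t s i ^ 2 = ∑ j, exp (s * φ i j) * t s j) (hφ : ∃ i j k l, φ i j ≠ φ k l) :
    StrictConvexOn ℝ Set.univ fun s => log (∑ i, t s i) := by
  have : Nonempty ι := let ⟨i, _⟩ := hφ; ⟨i⟩
  exact strictConvexOn_log_of_lt_rpow_mul_rpow convex_univ
    (fun s _ => sum_pos (fun i _ => ht s i) univ_nonempty)
    fun x _ y _ hxy a b ha hb hab => sum_solution_lt_rpow_mul_rpow ht heq hφ hxy ha hb hab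

end TransferSystem

theorem pressure_convex_general
    (m : ℕ) (φ : Fin m → Fin m → ℝ)
    (t : ℝ → Fin m → ℝ)
    (ht : ∀ s i, 0 < t s i)
    (heq : ∀ s i, (t s i) ^ 2 = ∑ j, Real.exp (s * φ i j) * t s j)
    (P : ℝ → ℝ) (hP : ∀ s, P s = Real.log (∑ i, t s i)) :
    ConvexOn ℝ Set.univ P ∧
      ((∃ i j k l, φ i j ≠ φ k l) → StrictConvexOn ℝ Set.univ P) := by
  obtain rfl : P = fun s => log (∑ i, t s i) := funext hP
  exact ⟨convexOn_log_sum ht heq, strictConvexOn_log_sum ht heq⟩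

/-- The pressure `P(s) = log ∑_i t_i(s)`, where `(t_i(s))` is the positive solution of the
transfer system, is convex; if `φ` is not constant it is strictly convex. -/
theorem pressure_convex
    (m : ℕ) (hm : 2 ≤ m) (φ : Fin m → Fin m → ℝ)
    (t : ℝ → Fin m → ℝ)
    (ht : ∀ s i, 0 < t s i)
    (heq : ∀ s i, (t s i) ^ 2 = ∑ j, Real.exp (s * φ i j) * t s j)
    (P : ℝ → ℝ) (hP : ∀ s, P s = Real.log (∑ i, t s i)) :
    ConvexOn ℝ Set.univ P ∧
      ((∃ i j k l, φ i j ≠ φ k l) → StrictConvexOn ℝ Set.univ P) :=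
  pressure_convex_general m φ t ht heq P hP
end

section
/- With P(s) = log Σ_i t_i(s) as above, the derivative P′ satisfies α_min ≤ P′(s) ≤ α_max for all s, where α_min = min_{i,j} φ(i,j) and α_max = max_{i,j} φ(i,j). Consequently the limits P′(−∞) and P′(+∞) lie in [α_min, α_max]. -/
/-!
Write `A(s)` for the kernel `e^{sφ(i,j)}`. Comparing, at an index where `u_i / v_i` is maximal, a
positive subsolution `u` and a positive supersolution `v` of `u_i² = ∑_j A_ij u_j` gives `u ≤ v`.
Since `e^{(s-s')α_min} A(s') ≤ A(s) ≤ e^{(s-s')α_max} A(s')` for `s' ≤ s`, this yields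
`e^{(s-s')α_min} t(s') ≤ t(s) ≤ e^{(s-s')α_max} t(s')`, so `P(s) - α_min s` and `α_max s - P(s)`
are monotone. The same maximal-ratio argument shows that the linearisation
`x ↦ 2 t_i x_i - ∑_j A_ij x_j` is injective; by the implicit function theorem and the uniqueness
of the positive solution, `t` and hence `P` are differentiable, and the monotonicity bounds `P′`.
-/

open Finset Filter Topology Real

theorem le_deriv_of_monotone_sub_mul {f : ℝ → ℝ} {a x : ℝ} (hf : DifferentiableAt ℝ f x)
    (hmono : Monotone fun y => f y - a * y) : a ≤ deriv f x := by
  have := hmono.deriv_nonneg (x := x)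
  rw [deriv_fun_sub hf (by fun_prop), deriv_const_mul_field', deriv_id''] at this
  linarith

theorem deriv_le_of_monotone_mul_sub {f : ℝ → ℝ} {b x : ℝ} (hf : DifferentiableAt ℝ f x)
    (hmono : Monotone fun y => b * y - f y) : deriv f x ≤ b := by
  have := hmono.deriv_nonneg (x := x)
  rw [deriv_fun_sub (by fun_prop) hf, deriv_const_mul_field', deriv_id''] at this
  linarith

section PositiveSolution

variable {ι : Type*} [Fintype ι] {A B : ι → ι → ℝ} {u v w : ι → ℝ} {c : ℝ}

def IsPosSolution (A : ι → ι → ℝ) (u : ι → ℝ) : Prop :=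
  (∀ i, 0 < u i) ∧ ∀ i, u i ^ 2 = ∑ j, A i j * u j

theorem le_of_sq_le_sum_of_sum_le_sq_s7 (hA : ∀ i j, 0 ≤ A i j) (hv : ∀ i, 0 < v i)
    (hu_sub : ∀ i, u i ^ 2 ≤ ∑ j, A i j * u j) (hv_sup : ∀ i, ∑ j, A i j * v j ≤ v i ^ 2)
    (i : ι) : u i ≤ v i := by
  have : Nonempty ι := ⟨i⟩
  obtain ⟨k, -, hk⟩ := exists_max_image univ (fun j => u j / v j) univ_nonempty
  set l := u k / v k
  have hle (j : ι) : u j ≤ l * v j := (div_le_iff₀ (hv j)).1 (hk j (mem_univ j))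
  suffices l ≤ 1 by nlinarith [hle i, hv i]
  by_contra! hl
  have : l ^ 2 * v k ^ 2 ≤ l * v k ^ 2 := calc
    l ^ 2 * v k ^ 2 = u k ^ 2 := by rw [← div_mul_cancel₀ (u k) (hv k).ne']; ring
    _ ≤ ∑ j, A k j * u j := hu_sub k
    _ ≤ ∑ j, A k j * (l * v j) := sum_le_sum fun j _ => mul_le_mul_of_nonneg_left (hle j) (hA k j)
    _ = l * ∑ j, A k j * v j := by simp only [mul_sum, mul_left_comm]
    _ ≤ l * v k ^ 2 := mul_le_mul_of_nonneg_left (hv_sup k) (by linarith)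
  nlinarith [le_of_mul_le_mul_right this (pow_pos (hv k) 2)]

namespace IsPosSolution

theorem smul_le (hB : ∀ i j, 0 ≤ B i j) (hc : 0 ≤ c) (hcAB : ∀ i j, c * A i j ≤ B i j)
    (hu : IsPosSolution A u) (hv : IsPosSolution B v) (i : ι) : c * u i ≤ v i := by
  refine le_of_sq_le_sum_of_sum_le_sq_s7 (u := fun k => c * u k) hB hv.1 (fun k => ?_)
    (fun k => (hv.2 k).ge) i
  calc (c * u k) ^ 2 = c * ∑ j, c * A k j * u j := by
        rw [mul_pow, sq, hu.2, mul_sum, mul_sum]; simp only [mul_assoc]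
    _ ≤ c * ∑ j, B k j * u j :=
      mul_le_mul_of_nonneg_left
        (sum_le_sum fun j _ => mul_le_mul_of_nonneg_right (hcAB k j) (hu.1 j).le) hc
    _ = ∑ j, B k j * (c * u j) := by simp only [mul_sum, mul_left_comm]

theorem le_smul (hA : ∀ i j, 0 ≤ A i j) (hc : 0 < c) (hBcA : ∀ i j, B i j ≤ c * A i j)
    (hu : IsPosSolution A u) (hv : IsPosSolution B v) (i : ι) : v i ≤ c * u i := by
  have := hv.smul_le hA (inv_nonneg.2 hc.le) (fun i j => (inv_mul_le_iff₀ hc).2 (hBcA i j)) hu i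
  rwa [inv_mul_le_iff₀ hc] at this

theorem unique (hA : ∀ i j, 0 ≤ A i j) (hu : IsPosSolution A u) (hv : IsPosSolution A v) :
    u = v :=
  funext fun i => le_antisymm (by simpa using hu.smul_le hA zero_le_one (by simp) hv i)
    (by simpa using hv.smul_le hA zero_le_one (by simp) hu i)

theorem sum_pos [Nonempty ι] (hu : IsPosSolution A u) : 0 < ∑ i, u i :=
  Finset.sum_pos (fun i _ => hu.1 i) univ_nonempty

theorem eq_zero_of_two_mul_eq_sum (hA : ∀ i j, 0 ≤ A i j) (hu : IsPosSolution A u)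
    (hw : ∀ i, 2 * u i * w i = ∑ j, A i j * w j) : w = 0 := by
  cases isEmpty_or_nonempty ι
  · exact Subsingleton.elim _ _
  obtain ⟨k, -, hk⟩ := exists_max_image univ (fun j => |w j| / u j) univ_nonempty
  set r := |w k| / u k
  have hle (j : ι) : |w j| ≤ r * u j := (div_le_iff₀ (hu.1 j)).1 (hk j (mem_univ j))
  have : 2 * (r * u k ^ 2) ≤ r * u k ^ 2 := calc
    2 * (r * u k ^ 2) = |2 * u k * w k| := by
      rw [abs_mul, abs_of_pos (by linarith [hu.1 k]), ← div_mul_cancel₀ |w k| (hu.1 k).ne']; ring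
    _ ≤ ∑ j, A k j * |w j| := by
      rw [hw k]
      exact (abs_sum_le_sum_abs _ _).trans_eq
        (sum_congr rfl fun j _ => by rw [abs_mul, abs_of_nonneg (hA k j)])
    _ ≤ ∑ j, A k j * (r * u j) := sum_le_sum fun j _ => mul_le_mul_of_nonneg_left (hle j) (hA k j)
    _ = r * u k ^ 2 := by rw [hu.2 k, mul_sum]; simp only [mul_left_comm]
  have hr : r ≤ 0 := by nlinarith [pow_pos (hu.1 k) 2]
  funext j
  exact abs_nonpos_iff.1 ((hle j).trans (mul_nonpos_of_nonpos_of_nonneg hr (hu.1 j).le))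

end IsPosSolution

end PositiveSolution

section ExpKernel

variable {ι : Type*} [Fintype ι] {φ : ι → ι → ℝ} {t : ℝ → ι → ℝ} {α β s s' : ℝ}

theorem exists_hasStrictFDerivAt_sq_sub_sum_exp (φ : ι → ι → ℝ) (p : ℝ × (ι → ℝ)) :
    ∃ F' : ℝ × (ι → ℝ) →L[ℝ] ι → ℝ,
      HasStrictFDerivAt (fun q : ℝ × (ι → ℝ) => fun i => q.2 i ^ 2 - ∑ j, exp (q.1 * φ i j) * q.2 j)
        F' p ∧
      ∀ w, F' (0, w) = fun i => 2 * p.2 i * w i - ∑ j, exp (p.1 * φ i j) * w j := by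
  have hc (j : ι) :=
    (hasStrictFDerivAt_apply j p.2).comp p (hasStrictFDerivAt_snd (p := p) (𝕜 := ℝ))
  refine ⟨_, hasStrictFDerivAt_pi.2 fun i => ((hc i).pow 2).sub
    (.fun_sum fun j _ => ((hasStrictFDerivAt_fst.mul_const (φ i j)).exp).mul (hc j)), fun w => ?_⟩
  ext i
  simp

theorem differentiableAt_of_isPosSolution_exp
    (ht : ∀ s, IsPosSolution (fun i j => exp (s * φ i j)) (t s)) (s₀ : ℝ) :
    DifferentiableAt ℝ t s₀ := by
  have hA (s : ℝ) : ∀ i j, 0 ≤ exp (s * φ i j) := fun _ _ => (exp_pos _).le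
  obtain ⟨F', hF, hF'⟩ := exists_hasStrictFDerivAt_sq_sub_sum_exp φ (s₀, t s₀)
  have hinj : Function.Injective (F' ∘L .inr ℝ ℝ (ι → ℝ)) := by
    refine (injective_iff_map_eq_zero _).2 fun w hw =>
      (ht s₀).eq_zero_of_two_mul_eq_sum (hA s₀) fun i => ?_
    have := congrFun ((hF' w).symm.trans hw) i
    simpa [sub_eq_zero] using this
  have hinv : (F' ∘L .inr ℝ ℝ (ι → ℝ)).IsInvertible :=
    ⟨(LinearEquiv.ofInjectiveEndo _ hinj).toContinuousLinearEquiv, rfl⟩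
  set ψ := hF.implicitFunctionOfProdDomain hinv
  have hψ : ∀ᶠ s in 𝓝 s₀, IsPosSolution (fun i j => exp (s * φ i j)) (ψ s) := by
    have hpos : ∀ᶠ s in 𝓝 s₀, ∀ i, 0 < ψ s i := eventually_all.2 fun i =>
      (tendsto_pi_nhds.1 (hF.tendsto_implicitFunctionOfProdDomain hinv) i).eventually
        (lt_mem_nhds ((ht s₀).1 i))
    filter_upwards [hpos, hF.eventually_apply_implicitFunctionOfProdDomain hinv] with s hs hFs
    refine ⟨hs, fun i => ?_⟩
    have := congrFun hFs i
    simp only [(ht s₀).2 i, sub_self] at this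
    linarith
  exact (hF.hasStrictFDerivAt_implicitFunctionOfProdDomain hinv).differentiableAt
    |>.congr_of_eventuallyEq (hψ.mono fun s hs => (ht s).unique (hA s) hs)

theorem exp_sub_mul_mul_le (ht : ∀ s, IsPosSolution (fun i j => exp (s * φ i j)) (t s))
    (hα : ∀ i j, α ≤ φ i j) (hs : s' ≤ s) (i : ι) : exp ((s - s') * α) * t s' i ≤ t s i :=
  (ht s').smul_le (fun _ _ => (exp_pos _).le) (exp_pos _).le
    (fun i j => by rw [← exp_add, exp_le_exp]; nlinarith [hα i j]) (ht s) i

theorem le_exp_sub_mul_mul (ht : ∀ s, IsPosSolution (fun i j => exp (s * φ i j)) (t s))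
    (hβ : ∀ i j, φ i j ≤ β) (hs : s' ≤ s) (i : ι) : t s i ≤ exp ((s - s') * β) * t s' i :=
  (ht s').le_smul (fun _ _ => (exp_pos _).le) (exp_pos _)
    (fun i j => by rw [← exp_add, exp_le_exp]; nlinarith [hβ i j]) (ht s) i

variable [Nonempty ι]

theorem monotone_log_sum_sub_mul (ht : ∀ s, IsPosSolution (fun i j => exp (s * φ i j)) (t s))
    (hα : ∀ i j, α ≤ φ i j) : Monotone fun s => log (∑ i, t s i) - α * s := by
  intro s' s hs
  have hsum := sum_le_sum fun i (_ : i ∈ univ) => exp_sub_mul_mul_le ht hα hs i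
  rw [← mul_sum] at hsum
  have := log_le_log (mul_pos (exp_pos _) (ht s').sum_pos) hsum
  rw [log_mul (exp_ne_zero _) (ht s').sum_pos.ne', log_exp] at this
  dsimp only
  linarith

theorem monotone_mul_sub_log_sum (ht : ∀ s, IsPosSolution (fun i j => exp (s * φ i j)) (t s))
    (hβ : ∀ i j, φ i j ≤ β) : Monotone fun s => β * s - log (∑ i, t s i) := by
  intro s' s hs
  have hsum := sum_le_sum fun i (_ : i ∈ univ) => le_exp_sub_mul_mul ht hβ hs i
  rw [← mul_sum] at hsum
  have := log_le_log (ht s).sum_pos hsum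
  rw [log_mul (exp_ne_zero _) (ht s').sum_pos.ne', log_exp] at this
  dsimp only
  linarith

end ExpKernel

theorem pressure_deriv_between_min_max_general
    (m : ℕ) (φ : Fin m → Fin m → ℝ)
    (t : ℝ → Fin m → ℝ)
    (ht : ∀ s i, 0 < t s i)
    (heq : ∀ s i, (t s i) ^ 2 = ∑ j, Real.exp (s * φ i j) * t s j)
    (P : ℝ → ℝ) (hP : ∀ s, P s = Real.log (∑ i, t s i))
    (αmin αmax : ℝ)
    (hαmin : IsLeast (Set.range fun p : Fin m × Fin m => φ p.1 p.2) αmin)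
    (hαmax : IsGreatest (Set.range fun p : Fin m × Fin m => φ p.1 p.2) αmax)
    (Pm Pp : ℝ)
    (hPm : Tendsto (deriv P) atBot (nhds Pm))
    (hPp : Tendsto (deriv P) atTop (nhds Pp)) :
    (∀ s, αmin ≤ deriv P s ∧ deriv P s ≤ αmax) ∧
      Pm ∈ Set.Icc αmin αmax ∧ Pp ∈ Set.Icc αmin αmax := by
  obtain ⟨⟨i₀, -⟩, -⟩ := hαmin.1
  have : Nonempty (Fin m) := ⟨i₀⟩
  have hsol (s : ℝ) : IsPosSolution (fun i j => exp (s * φ i j)) (t s) := ⟨ht s, heq s⟩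
  have hmin (i j : Fin m) : αmin ≤ φ i j := hαmin.2 ⟨(i, j), rfl⟩
  have hmax (i j : Fin m) : φ i j ≤ αmax := hαmax.2 ⟨(i, j), rfl⟩
  rw [show P = fun s => log (∑ i, t s i) from funext hP] at hPm hPp ⊢
  have hbounds (s : ℝ) : deriv (fun s => log (∑ i, t s i)) s ∈ Set.Icc αmin αmax := by
    have hdiff : DifferentiableAt ℝ (fun s => log (∑ i, t s i)) s :=
      (DifferentiableAt.fun_sum fun i _ => differentiableAt_pi.1
        (differentiableAt_of_isPosSolution_exp hsol s) i).log (hsol s).sum_pos.ne'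
    exact ⟨le_deriv_of_monotone_sub_mul hdiff (monotone_log_sum_sub_mul hsol hmin),
      deriv_le_of_monotone_mul_sub hdiff (monotone_mul_sub_log_sum hsol hmax)⟩
  exact ⟨hbounds, isClosed_Icc.mem_of_tendsto hPm (.of_forall hbounds),
    isClosed_Icc.mem_of_tendsto hPp (.of_forall hbounds)⟩

/-- The derivative of the pressure `P(s) = log ∑_i t_i(s)` always lies between
`α_min = min φ` and `α_max = max φ`; consequently the limits `P′(∓∞)` lie in
`[α_min, α_max]`. -/
theorem pressure_deriv_between_min_max
    (m : ℕ) (hm : 2 ≤ m) (φ : Fin m → Fin m → ℝ)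
    (t : ℝ → Fin m → ℝ)
    (ht : ∀ s i, 0 < t s i)
    (heq : ∀ s i, (t s i) ^ 2 = ∑ j, Real.exp (s * φ i j) * t s j)
    (P : ℝ → ℝ) (hP : ∀ s, P s = Real.log (∑ i, t s i))
    (αmin αmax : ℝ)
    (hαmin : IsLeast (Set.range fun p : Fin m × Fin m => φ p.1 p.2) αmin)
    (hαmax : IsGreatest (Set.range fun p : Fin m × Fin m => φ p.1 p.2) αmax)
    (Pm Pp : ℝ)
    (hPm : Tendsto (deriv P) atBot (nhds Pm))
    (hPp : Tendsto (deriv P) atTop (nhds Pp)) :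
    (∀ s, αmin ≤ deriv P s ∧ deriv P s ≤ αmax) ∧
      Pm ∈ Set.Icc αmin αmax ∧ Pp ∈ Set.Icc αmin αmax :=
  pressure_deriv_between_min_max_general m φ t ht heq P hP αmin αmax hαmin hαmax Pm Pp hPm hPp
end

section
/- Let m = 2 and φ(i,j) = ij on {0,1}². Then the pressure P(s) of the nonlinear transfer system satisfies P(s) = 2 log t₀(s), where x = t₀(s) is the unique relevant real root of the cubic equation x³ − 2x² − (e^s − 1)x + (e^s − 1) = 0. -/
/-- For `m = 2` and `φ(i,j) = ij`, the pressure of the nonlinear transfer system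
`t₀² = t₀ + t₁`, `t₁² = t₀ + e^s t₁` satisfies `P(s) = 2 log t₀(s)`, where `t₀(s)` is a root
of the cubic `x³ - 2x² - (e^s - 1)x + (e^s - 1) = 0`. -/
theorem pressure_cubic_equation
    (s : ℝ) (t₀ t₁ : ℝ) (h₀ : 0 < t₀) (h₁ : 0 < t₁)
    (e₀ : t₀ ^ 2 = t₀ + t₁) (e₁ : t₁ ^ 2 = t₀ + Real.exp s * t₁) :
    Real.log (t₀ + t₁) = 2 * Real.log t₀ ∧
      t₀ ^ 3 - 2 * t₀ ^ 2 - (Real.exp s - 1) * t₀ + (Real.exp s - 1) = 0 := by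
  constructor
  · rw [← e₀, Real.log_pow]; norm_num
  · have ht : t₁ = t₀ ^ 2 - t₀ := by linarith
    have key : t₀ * (t₀ ^ 3 - 2 * t₀ ^ 2 - (Real.exp s - 1) * t₀ + (Real.exp s - 1)) = 0 := by
      rw [ht] at e₁; ring_nf; ring_nf at e₁; linarith
    rcases mul_eq_zero.mp key with h | h
    · linarith
    · exact h
end

section
/- Let (F_n) be a uniformly bounded sequence of functions on S × S and let ℙ_s be the product-of-Markov measure on Σ_m built from the transfer-operator Markov chain (π, (p_{i,j})) placed independently on each dyadic block Λ_i. Then for ℙ_s-almost every x, (1/n) Σ_{k=1}^n (F_k(x_k, x_{2k}) − 𝔼_{ℙ_s}[F_k(x_k, x_{2k})]) → 0. -/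
/-!
Write `X_k = F_k(x_k, x_{2k}) - 𝔼 F_k(x_k, x_{2k})`. The cylinder probabilities of `ℙ_s` factor
over the dyadic blocks `Λ_i`, so coordinates in different blocks are independent; since `k` and
`2k` lie in the same block, `X_j` and `X_k` are uncorrelated unless `j` and `k` have the same odd
part. An index `k ≤ n` shares its odd part with at most `log₂ n + 1` others, hence
`𝔼 (X_1 + ⋯ + X_n)² = O(n log n)`. Along `n = q⁴` this makes `∑_q 𝔼 (S_{q⁴} / q⁴)²` finite, so
`S_{q⁴} / q⁴ → 0` almost surely, and bounded increments fill the gaps between fourth powers.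
-/

open MeasureTheory Filter Finset Function Topology ProbabilityTheory

namespace Nat

lemma ordCompl_two_mul (k : ℕ) : ordCompl[2] (2 * k) = ordCompl[2] k := by
  simpa using ordCompl_self_pow_mul k 1 prime_two

lemma ordCompl_mul_two_pow_of_odd {i : ℕ} (hi : Odd i) (j : ℕ) : ordCompl[2] (i * 2 ^ j) = i := by
  rw [mul_comm, ordCompl_pow_mul_of_not_dvd j prime_two hi.not_two_dvd_nat]

/-- A number `k ≤ n` is determined by its odd part and its `2`-adic valuation, which is at most
`log₂ n`. -/
lemma card_filter_ordCompl_two_eq_le (n d : ℕ) :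
    #{k ∈ Icc 1 n | ordCompl[2] k = d} ≤ log 2 n + 1 := by
  calc #{k ∈ Icc 1 n | ordCompl[2] k = d} ≤ #(range (log 2 n + 1)) := by
        refine card_le_card_of_injOn (fun k => k.factorization 2) (fun k hk => ?_) ?_
        · simp only [coe_filter, mem_Icc, Set.mem_ofPred_eq] at hk
          simpa [Nat.lt_succ_iff] using le_log_of_pow_le one_lt_two
            ((le_of_dvd (by omega) (ordProj_dvd k 2)).trans hk.1.2)
        · intro a ha b hb hab
          simp only [coe_filter, Set.mem_ofPred_eq] at ha hb
          rw [← ordProj_mul_ordCompl_eq_self a 2, ← ordProj_mul_ordCompl_eq_self b 2, ha.2, hb.2]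
          simp only at hab
          rw [hab]
    _ = log 2 n + 1 := card_range _

end Nat

theorem Fintype.sum_mul_mul_sum_eq_of_dependsOn {ι α : Type*} [Fintype ι] [DecidableEq ι]
    [Fintype α] (s : Finset ι) {f g W R : (ι → α) → ℝ} (hf : DependsOn f s) (hW : DependsOn W s)
    (hg : DependsOn g (↑s)ᶜ) (hR : DependsOn R (↑s)ᶜ) :
    (∑ v, f v * g v * (W v * R v)) * ∑ v, W v * R v =
      (∑ v, f v * (W v * R v)) * ∑ v, g v * (W v * R v) := by
  -- exchanging the `sᶜ`-coordinates of two configurations is a bijection of pairs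
  let σ : (ι → α) × (ι → α) → (ι → α) × (ι → α) := fun p =>
    (s.piecewise p.1 p.2, s.piecewise p.2 p.1)
  have hσ : Function.Involutive σ := fun p => by
    ext i <;> by_cases hi : i ∈ s <;> simp [σ, hi]
  simp only [sum_mul_sum, ← Fintype.sum_prod_type']
  refine Fintype.sum_equiv hσ.toPerm _ _ fun ⟨v, u⟩ => ?_
  have hs : ∀ {h : (ι → α) → ℝ}, DependsOn h s → ∀ v u, h (s.piecewise v u) = h v :=
    fun hh v u => hh fun i hi => piecewise_eq_of_mem _ _ _ hi
  have hsc : ∀ {h : (ι → α) → ℝ}, DependsOn h (↑s)ᶜ → ∀ v u, h (s.piecewise v u) = h u :=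
    fun hh v u => hh fun i hi => piecewise_eq_of_notMem _ _ _ hi
  simp only [Function.Involutive.coe_toPerm, σ, hs hf, hs hW, hsc hg, hsc hR]
  ring

lemma DependsOn.comp_updateFinset {α β : Type*} {h : (ℕ → α) → β} {T : Set ℕ}
    (hh : DependsOn h T) (x₀ : ℕ → α) (A : Finset ℕ) :
    DependsOn (fun v => h (Function.updateFinset x₀ A v)) {k : A | (k : ℕ) ∈ T} :=
  fun v v' hvv' => hh fun k hk => by
    simp only [Function.updateFinset]
    split_ifs with hkA
    exacts [hvv' ⟨k, hkA⟩ hk, rfl]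

lemma Finset.preimage_restrict_singleton {α : Type*} {A : Finset ℕ} (x₀ : ℕ → α) (v : A → α) :
    A.restrict (π := fun _ => α) ⁻¹' {v} = {x | ∀ k ∈ A, x k = updateFinset x₀ A v k} := by
  ext x
  simp +contextual [funext_iff, updateFinset]

section Cylinder

variable {α : Type*} [Fintype α] [MeasurableSpace α] [MeasurableSingletonClass α]
  {μ : Measure (ℕ → α)} {A : Finset ℕ}

theorem integral_eq_sum_measureReal_cylinder [IsFiniteMeasure μ] (x₀ : ℕ → α)
    {H : (ℕ → α) → ℝ} (hH : DependsOn H A) :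
    ∫ x, H x ∂μ = ∑ v : A → α,
      H (updateFinset x₀ A v) * μ.real {x | ∀ k ∈ A, x k = updateFinset x₀ A v k} := by
  have hHx : (fun x => H x) = fun x => H (updateFinset x₀ A (A.restrict x)) :=
    funext fun x => hH fun k hk => by simp [updateFinset, mem_coe.mp hk]
  rw [hHx, ← integral_map (φ := A.restrict (π := fun _ => α))
      (Finset.measurable_restrict A).aemeasurable (f := fun v => H (updateFinset x₀ A v))
      (measurable_of_countable _).aestronglyMeasurable, integral_fintype Integrable.of_finite]
  refine sum_congr rfl fun v _ => ?_
  rw [smul_eq_mul, mul_comm, map_measureReal_apply (Finset.measurable_restrict A)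
    (measurableSet_singleton v), preimage_restrict_singleton x₀]

theorem integral_mul_eq_mul_integral_of_cylinder_eq_prod [IsProbabilityMeasure μ]
    {β : Type*} [DecidableEq β] (b : ℕ → β) (L : Finset β) (w : β → (ℕ → α) → ℝ)
    (hw0 : ∀ ℓ a, 0 ≤ w ℓ a) (hw : ∀ ℓ ∈ L, DependsOn (w ℓ) (b ⁻¹' {ℓ}))
    (hcyl : ∀ a, μ {x | ∀ k ∈ A, x k = a k} = ENNReal.ofReal (∏ ℓ ∈ L, w ℓ a))
    (ℓ₀ : β) {f g : (ℕ → α) → ℝ} (hf : DependsOn f (↑A ∩ b ⁻¹' {ℓ₀}))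
    (hg : DependsOn g (↑A ∩ (b ⁻¹' {ℓ₀})ᶜ)) :
    ∫ x, f x * g x ∂μ = (∫ x, f x ∂μ) * ∫ x, g x ∂μ := by
  classical
  obtain ⟨x₀⟩ := nonempty_of_isProbabilityMeasure μ
  set e := updateFinset x₀ A
  set W := fun v => ∏ ℓ ∈ L with ℓ = ℓ₀, w ℓ (e v)
  set R := fun v => ∏ ℓ ∈ L with ℓ ≠ ℓ₀, w ℓ (e v)
  have hint : ∀ {h}, DependsOn h A → ∫ x, h x ∂μ = ∑ v, h (e v) * (W v * R v) := fun hh => by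
    refine (integral_eq_sum_measureReal_cylinder x₀ hh).trans (sum_congr rfl fun v _ => ?_)
    rw [measureReal_def, hcyl, ENNReal.toReal_ofReal (prod_nonneg fun ℓ _ => hw0 ℓ _),
      ← prod_filter_mul_prod_filter_not L (· = ℓ₀)]
  have hmass : ∑ v, W v * R v = 1 := by
    simpa using (hint (h := fun _ => (1 : ℝ)) (dependsOn_const 1 |>.mono (Set.empty_subset _))).symm
  let s : Finset A := {k | b k = ℓ₀}
  have hW : DependsOn W s := fun v v' h => prod_congr rfl fun ℓ hℓ =>
    ((hw ℓ (mem_filter.mp hℓ).1).comp_updateFinset x₀ A).mono (fun k hk => by simp_all [s]) h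
  have hR : DependsOn R (↑s)ᶜ := fun v v' h => prod_congr rfl fun ℓ hℓ =>
    ((hw ℓ (mem_filter.mp hℓ).1).comp_updateFinset x₀ A).mono (fun k hk => by simp_all [s]) h
  have hf' : DependsOn (fun v => f (e v)) s := (hf.comp_updateFinset x₀ A).mono fun k hk => by simp_all [s]
  have hg' : DependsOn (fun v => g (e v)) (↑s)ᶜ := (hg.comp_updateFinset x₀ A).mono fun k hk => by simp_all [s]
  have hfg : DependsOn (fun x => f x * g x) A := fun x y h => by
    change f x * g x = f y * g y
    rw [hf fun k hk => h k hk.1, hg fun k hk => h k hk.1]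
  rw [hint hfg, hint (hf.mono Set.inter_subset_left), hint (hg.mono Set.inter_subset_left),
    ← Fintype.sum_mul_mul_sum_eq_of_dependsOn s hf' hW hg' hR, hmass, mul_one]

end Cylinder

lemma Nat.sqrt_sqrt_pow_four_le (n : ℕ) : sqrt (sqrt n) ^ 4 ≤ n :=
  calc sqrt (sqrt n) ^ 4 = (sqrt (sqrt n) ^ 2) ^ 2 := by ring
    _ ≤ sqrt n ^ 2 := Nat.pow_le_pow_left (sqrt_le' _) 2
    _ ≤ n := sqrt_le' n

lemma Nat.lt_sqrt_sqrt_add_one_pow_four (n : ℕ) : n < (sqrt (sqrt n) + 1) ^ 4 :=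
  calc n < (sqrt n + 1) ^ 2 := lt_succ_sqrt' n
    _ ≤ ((sqrt (sqrt n) + 1) ^ 2) ^ 2 := Nat.pow_le_pow_left (lt_succ_sqrt' _) 2
    _ = (sqrt (sqrt n) + 1) ^ 4 := by ring

lemma abs_sub_le_mul_of_abs_succ_sub_le {u : ℕ → ℝ} {K : ℝ} (hu : ∀ n, |u (n + 1) - u n| ≤ K)
    {m n : ℕ} (hmn : m ≤ n) : |u n - u m| ≤ K * (n - m) :=
  calc |u n - u m| ≤ ∑ i ∈ Ico m n, |u (i + 1) - u i| := by
        simpa only [Real.dist_eq, abs_sub_comm] using dist_le_Ico_sum_dist u hmn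
    _ ≤ ∑ i ∈ Ico m n, K := sum_le_sum fun i _ => hu i
    _ = K * (n - m) := by
        rw [sum_const, Nat.card_Ico, nsmul_eq_mul, Nat.cast_sub hmn, mul_comm]

theorem tendsto_inv_mul_of_tendsto_pow_four {u : ℕ → ℝ} {K : ℝ}
    (hu : ∀ n, |u (n + 1) - u n| ≤ K)
    (h : Tendsto (fun q : ℕ => ((q : ℝ) ^ 4)⁻¹ * u (q ^ 4)) atTop (𝓝 0)) :
    Tendsto (fun n : ℕ => (n : ℝ)⁻¹ * u n) atTop (𝓝 0) := by
  set p : ℕ → ℕ := fun n => Nat.sqrt (Nat.sqrt n)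
  have hp : Tendsto p atTop atTop := tendsto_atTop_atTop.mpr fun b => ⟨b ^ 4, fun n hn => by
    by_contra! hpb
    exact (Nat.lt_sqrt_sqrt_add_one_pow_four n).not_ge (hn.trans' (Nat.pow_le_pow_left hpb 4))⟩
  have hK : 0 ≤ K := (abs_nonneg _).trans (hu 0)
  refine squeeze_zero_norm' ?_ (by simpa using
    ((h.abs).add (tendsto_const_div_atTop_nhds_zero_nat (15 * K))).comp hp)
  filter_upwards [eventually_ge_atTop 1] with n hn
  have hP : (1 : ℝ) ≤ p n := by exact_mod_cast Nat.sqrt_pos.mpr (Nat.sqrt_pos.mpr hn)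
  have hpn : (p n : ℝ) ^ 4 ≤ n := by exact_mod_cast Nat.sqrt_sqrt_pow_four_le n
  have hn' : (n : ℝ) + 1 ≤ (p n + 1) ^ 4 := by exact_mod_cast Nat.lt_sqrt_sqrt_add_one_pow_four n
  have hun : |u n| ≤ |u (p n ^ 4)| + K * (n - (p n : ℝ) ^ 4) := by
    have := abs_sub_le_mul_of_abs_succ_sub_le hu (Nat.sqrt_sqrt_pow_four_le n)
    push_cast at this
    linarith [abs_sub_abs_le_abs_sub (u n) (u (p n ^ 4))]
  simp only [Function.comp_apply, norm_mul, norm_inv, Real.norm_eq_abs, Nat.abs_cast]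
  set P : ℝ := (p n : ℝ)
  have hgap : (n : ℝ) - P ^ 4 ≤ 15 * P ^ 3 := by
    have h1 : P ≤ P ^ 3 := le_self_pow₀ hP (by norm_num)
    have h2 : P ^ 2 ≤ P ^ 3 := pow_le_pow_right₀ hP (by norm_num)
    linarith [show (P + 1) ^ 4 = P ^ 4 + 4 * P ^ 3 + 6 * P ^ 2 + 4 * P + 1 by ring]
  calc (n : ℝ)⁻¹ * |u n| ≤ (P ^ 4)⁻¹ * (|u (p n ^ 4)| + 15 * K * P ^ 3) := by
        refine mul_le_mul (inv_anti₀ (by positivity) hpn) ?_ (abs_nonneg _) (by positivity)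
        nlinarith
    _ = (P ^ 4)⁻¹ * |u (p n ^ 4)| + 15 * K / P := by
        field_simp

section StrongLaw

variable {Ω : Type*} [MeasurableSpace Ω] {μ : Measure Ω}

theorem integral_sq_sum_le_of_integral_mul_eq_zero [IsProbabilityMeasure μ] {ι β : Type*}
    [DecidableEq β] {X : ι → Ω → ℝ} {s : Finset ι} (c : ι → β) {K : ℝ} {L : ℕ}
    (hX : ∀ i, AEStronglyMeasurable (X i) μ) (hXK : ∀ i x, |X i x| ≤ K)
    (huncorr : ∀ i ∈ s, ∀ j ∈ s, c i ≠ c j → ∫ x, X i x * X j x ∂μ = 0)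
    (hL : ∀ i ∈ s, #{j ∈ s | c j = c i} ≤ L) :
    ∫ x, (∑ i ∈ s, X i x) ^ 2 ∂μ ≤ K ^ 2 * #s * L := by
  have hbound : ∀ i j x, ‖X i x * X j x‖ ≤ K ^ 2 := fun i j x => by
    rw [norm_mul, Real.norm_eq_abs, Real.norm_eq_abs, sq]
    exact mul_le_mul (hXK i x) (hXK j x) (abs_nonneg _) ((abs_nonneg _).trans (hXK i x))
  have hint : ∀ i j, Integrable (fun x => X i x * X j x) μ := fun i j =>
    .of_bound ((hX i).mul (hX j)) _ (.of_forall (hbound i j))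
  have hrow : ∀ i ∈ s, ∑ j ∈ s, ∫ x, X i x * X j x ∂μ ≤ K ^ 2 * L := fun i hi => by
    rw [← sum_filter_add_sum_filter_not s (fun j => c j = c i),
      sum_eq_zero (s := {j ∈ s | ¬c j = c i}) fun j hj =>
        huncorr i hi j (mem_filter.mp hj).1 (Ne.symm (mem_filter.mp hj).2), add_zero]
    calc ∑ j ∈ s with c j = c i, ∫ x, X i x * X j x ∂μ
        ≤ ∑ j ∈ s with c j = c i, K ^ 2 := sum_le_sum fun j _ => by
          simpa using (le_abs_self _).trans
            (norm_integral_le_of_norm_le_const (μ := μ) (.of_forall (hbound i j)))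
      _ ≤ K ^ 2 * L := by
          rw [sum_const, nsmul_eq_mul, mul_comm]
          gcongr
          exact_mod_cast hL i hi
  simp_rw [sq, sum_mul_sum]
  rw [integral_finsetSum _ fun i _ => integrable_finsetSum _ fun j _ => hint i j]
  simp_rw [integral_finsetSum _ fun j _ => hint _ j]
  calc ∑ i ∈ s, ∑ j ∈ s, ∫ x, X i x * X j x ∂μ ≤ ∑ i ∈ s, K ^ 2 * L := sum_le_sum hrow
    _ = K * K * #s * L := by rw [sum_const, nsmul_eq_mul]; ring

theorem ae_tendsto_zero_of_summable_integral_sq {Y : ℕ → Ω → ℝ}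
    (hY : ∀ q, Integrable (fun x => Y q x ^ 2) μ) (hsum : Summable fun q => ∫ x, Y q x ^ 2 ∂μ) :
    ∀ᵐ x ∂μ, Tendsto (fun q => Y q x) atTop (𝓝 0) := by
  have hmeas : ∀ q, AEMeasurable (fun x => ENNReal.ofReal (Y q x ^ 2)) μ := fun q =>
    (hY q).aemeasurable.ennreal_ofReal
  have hfin : ∫⁻ x, ∑' q, ENNReal.ofReal (Y q x ^ 2) ∂μ ≠ ⊤ := by
    rw [lintegral_tsum hmeas]
    simp_rw [← ofReal_integral_eq_lintegral_ofReal (hY _) (.of_forall fun x => sq_nonneg _)]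
    rw [← ENNReal.ofReal_tsum_of_nonneg (fun q => integral_nonneg fun x => sq_nonneg _) hsum]
    exact ENNReal.ofReal_ne_top
  filter_upwards [ae_lt_top' (AEMeasurable.tsum hmeas) hfin] with x hx
  have hsq : Summable fun q => Y q x ^ 2 := by
    simpa [ENNReal.toReal_ofReal (sq_nonneg _)] using ENNReal.summable_toReal hx.ne
  rw [tendsto_zero_iff_abs_tendsto_zero]
  simpa [Function.comp_def] using
    (hsq.tendsto_atTop_zero.sqrt).congr fun q => Real.sqrt_sq_eq_abs (Y q x)

theorem ae_tendsto_inv_mul_sum_of_integral_sq_sum_le [IsProbabilityMeasure μ]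
    {X : ℕ → Ω → ℝ} {K D : ℝ}
    (hX : ∀ k, AEStronglyMeasurable (X k) μ) (hXK : ∀ k x, |X k x| ≤ K)
    (hvar : ∀ n : ℕ, ∫ x, (∑ k ∈ Icc 1 n, X k x) ^ 2 ∂μ ≤ D * n * (Nat.log 2 n + 1)) :
    ∀ᵐ x ∂μ, Tendsto (fun n : ℕ => (n : ℝ)⁻¹ * ∑ k ∈ Icc 1 n, X k x) atTop (𝓝 0) := by
  set S : ℕ → Ω → ℝ := fun n x => ∑ k ∈ Icc 1 n, X k x
  have hS : ∀ n, MemLp (S n) 2 μ := fun n =>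
    .of_bound (aestronglyMeasurable_fun_sum _ fun k _ => hX k) (n * K) <| .of_forall fun x =>
      calc ‖S n x‖ ≤ ∑ k ∈ Icc 1 n, |X k x| := by simpa using norm_sum_le (Icc 1 n) (X · x)
        _ ≤ n * K := by simpa using sum_le_sum fun k (_ : k ∈ Icc 1 n) => hXK k x
  have hD : 0 ≤ D := by simpa using (integral_nonneg fun x => sq_nonneg (S 1 x)).trans (hvar 1)
  set Y : ℕ → Ω → ℝ := fun q x => ((q : ℝ) ^ 4)⁻¹ * S (q ^ 4) x
  have hY : ∀ q, Integrable (fun x => Y q x ^ 2) μ := fun q => ((hS _).const_mul _).integrable_sq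
  have hlog : ∀ q : ℕ, 1 ≤ q → (Nat.log 2 (q ^ 4) : ℝ) + 1 ≤ 4 * q := fun q hq => by
    have : q ^ 4 < 2 ^ (4 * q) := by
      rw [mul_comm, pow_mul]; exact Nat.pow_lt_pow_left Nat.lt_two_pow_self (by norm_num)
    exact_mod_cast Nat.log_lt_of_lt_pow (by positivity) this
  have hEY : ∀ q : ℕ, ∫ x, Y q x ^ 2 ∂μ ≤ 4 * D * (1 / (q : ℝ) ^ 3) := fun q => by
    rcases Nat.eq_zero_or_pos q with rfl | hq
    · simp [Y]
    simp_rw [Y, mul_pow, integral_const_mul]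
    calc (((q : ℝ) ^ 4)⁻¹) ^ 2 * ∫ x, S (q ^ 4) x ^ 2 ∂μ
        ≤ (((q : ℝ) ^ 4)⁻¹) ^ 2 * (D * (q : ℝ) ^ 4 * (4 * q)) := by
          gcongr
          exact (hvar _).trans (by push_cast; gcongr; exact hlog q hq)
      _ = 4 * D * (1 / (q : ℝ) ^ 3) := by field_simp
  have hsum : Summable fun q => ∫ x, Y q x ^ 2 ∂μ :=
    .of_nonneg_of_le (fun q => integral_nonneg fun x => sq_nonneg _) hEY
      ((Real.summable_one_div_nat_pow.mpr (by norm_num)).mul_left _)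
  filter_upwards [ae_tendsto_zero_of_summable_integral_sq hY hsum] with x hx
  refine tendsto_inv_mul_of_tendsto_pow_four (u := fun n => S n x) (K := K) (fun n => ?_) hx
  simpa [S, sum_Icc_succ_top (Nat.le_add_left 1 n)] using hXK (n + 1) x

end StrongLaw

section ProductMarkov

variable {m : ℕ} {φ : Fin m → Fin m → ℝ} {s : ℝ} {t : Fin m → ℝ}

/-- The factor of `ℙ_s[x_1 … x_n = a_1 … a_n]` contributed by the block `Λ_i = {i, 2i, 4i, …}`:
the initial law at `a_i`, then the transitions along `Λ_i ∩ [1, n]`. -/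
noncomputable def markovBlockWeight (φ : Fin m → Fin m → ℝ) (s : ℝ) (t : Fin m → ℝ) (n i : ℕ)
    (a : ℕ → Fin m) : ℝ :=
  (t (a i) / ∑ j, t j) *
    ∏ j ∈ (range (n + 1)).filter (fun j => i * 2 ^ (j + 1) ≤ n),
      Real.exp (s * φ (a (i * 2 ^ j)) (a (i * 2 ^ (j + 1)))) *
        t (a (i * 2 ^ (j + 1))) / (t (a (i * 2 ^ j))) ^ 2

lemma markovBlockWeight_nonneg (ht : ∀ i, 0 < t i) (n i : ℕ) (a : ℕ → Fin m) :
    0 ≤ markovBlockWeight φ s t n i a :=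
  mul_nonneg (div_nonneg (ht _).le (sum_nonneg fun j _ => (ht j).le)) <| prod_nonneg fun _ _ =>
    div_nonneg (mul_nonneg (Real.exp_pos _).le (ht _).le) (sq_nonneg _)

lemma dependsOn_markovBlockWeight {i : ℕ} (hi : Odd i) (n : ℕ) :
    DependsOn (markovBlockWeight φ s t n i) {k | ordCompl[2] k = i} := fun a a' h => by
  have hblock : ∀ j, a (i * 2 ^ j) = a' (i * 2 ^ j) := fun j =>
    h _ (Nat.ordCompl_mul_two_pow_of_odd hi j)
  have h0 : a i = a' i := h i (by simpa using Nat.ordCompl_mul_two_pow_of_odd hi 0)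
  simp only [markovBlockWeight, hblock, h0]

theorem integral_mul_eq_mul_integral_of_ordCompl_ne (ht : ∀ i, 0 < t i)
    {Ps : Measure (ℕ → Fin m)} [IsProbabilityMeasure Ps]
    (hPs : ∀ (n : ℕ) (a : ℕ → Fin m), Ps {x | ∀ k ∈ Icc 1 n, x k = a k} =
      ENNReal.ofReal (∏ i ∈ (Icc 1 n).filter (fun i => Odd i), markovBlockWeight φ s t n i a))
    {j k : ℕ} (hj : 0 < j) (hk : 0 < k) (hjk : ordCompl[2] j ≠ ordCompl[2] k)
    (f g : Fin m → Fin m → ℝ) :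
    ∫ x, f (x j) (x (2 * j)) * g (x k) (x (2 * k)) ∂Ps =
      (∫ x, f (x j) (x (2 * j)) ∂Ps) * ∫ x, g (x k) (x (2 * k)) ∂Ps := by
  have hmem : ∀ {l}, 0 < l → l ≤ j + k → l ∈ (Icc 1 (2 * (j + k)) : Set ℕ) ∧
      2 * l ∈ (Icc 1 (2 * (j + k)) : Set ℕ) := fun hl hle => by
    simp only [coe_Icc, Set.mem_Icc]; omega
  refine integral_mul_eq_mul_integral_of_cylinder_eq_prod (fun k => ordCompl[2] k) _ _
    (markovBlockWeight_nonneg ht _)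
    (fun i hi => dependsOn_markovBlockWeight (mem_filter.mp hi).2 _)
    (hPs (2 * (j + k))) (ordCompl[2] j) (fun x y h => ?_) (fun x y h => ?_)
  · rw [h j ⟨(hmem hj (by omega)).1, rfl⟩,
      h (2 * j) ⟨(hmem hj (by omega)).2, Nat.ordCompl_two_mul j⟩]
  · rw [h k ⟨(hmem hk (by omega)).1, Ne.symm hjk⟩,
      h (2 * k) ⟨(hmem hk (by omega)).2, by simpa [Nat.ordCompl_two_mul] using Ne.symm hjk⟩]

end ProductMarkov

theorem lln_multiple_averages_product_markov_general
    (m : ℕ) (φ : Fin m → Fin m → ℝ) (s : ℝ)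
    (t : Fin m → ℝ) (ht : ∀ i, 0 < t i)
    (Ps : Measure (ℕ → Fin m)) (hprob : IsProbabilityMeasure Ps)
    (hPs : ∀ (n : ℕ) (a : ℕ → Fin m),
      Ps {x | ∀ k ∈ Icc 1 n, x k = a k} = ENNReal.ofReal
        (∏ i ∈ (Icc 1 n).filter (fun i => Odd i),
          ((t (a i) / ∑ j, t j) *
            ∏ j ∈ (Finset.range (n + 1)).filter (fun j => i * 2 ^ (j + 1) ≤ n),
              Real.exp (s * φ (a (i * 2 ^ j)) (a (i * 2 ^ (j + 1)))) *
                t (a (i * 2 ^ (j + 1))) / (t (a (i * 2 ^ j))) ^ 2)))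
    (F : ℕ → Fin m → Fin m → ℝ) (C : ℝ)
    (hF : ∀ n a b, |F n a b| ≤ C) :
    ∀ᵐ x ∂Ps, Tendsto
      (fun n : ℕ => (n : ℝ)⁻¹ * ∑ k ∈ Icc 1 n,
        (F k (x k) (x (2 * k)) - ∫ y, F k (y k) (y (2 * k)) ∂Ps))
      atTop (nhds 0) := by
  set Z : ℕ → (ℕ → Fin m) → ℝ := fun k x => F k (x k) (x (2 * k))
  have hZ : ∀ k, MemLp (Z k) 2 Ps := fun k =>
    .of_bound (by fun_prop : Measurable (Z k)).aestronglyMeasurable C (.of_forall fun x => hF k _ _)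
  have hX : ∀ k, AEStronglyMeasurable (fun x => Z k x - ∫ y, Z k y ∂Ps) Ps := fun k =>
    (hZ k).aestronglyMeasurable.sub aestronglyMeasurable_const
  have hXC : ∀ k x, |Z k x - ∫ y, Z k y ∂Ps| ≤ 2 * C := fun k x => by
    have hint : |∫ y, Z k y ∂Ps| ≤ C := by
      simpa using norm_integral_le_of_norm_le_const (μ := Ps) (f := Z k)
        (.of_forall fun y => (Real.norm_eq_abs _).trans_le (hF k _ _))
    linarith [abs_sub (Z k x) (∫ y, Z k y ∂Ps), hF k (x k) (x (2 * k))]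
  have huncorr : ∀ j k, 0 < j → 0 < k → ordCompl[2] j ≠ ordCompl[2] k →
      ∫ x, (Z j x - ∫ y, Z j y ∂Ps) * (Z k x - ∫ y, Z k y ∂Ps) ∂Ps = 0 := fun j k hj hk hjk => by
    change cov[Z j, Z k; Ps] = 0
    rw [covariance_eq_sub (hZ j) (hZ k), sub_eq_zero]
    exact integral_mul_eq_mul_integral_of_ordCompl_ne ht hPs hj hk hjk (F j) (F k)
  refine ae_tendsto_inv_mul_sum_of_integral_sq_sum_le (D := (2 * C) ^ 2) hX hXC fun n => ?_
  calc _ ≤ (2 * C) ^ 2 * #(Icc 1 n) * (Nat.log 2 n + 1 : ℕ) :=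
        integral_sq_sum_le_of_integral_mul_eq_zero (fun k => ordCompl[2] k) hX hXC
          (fun j hj k hk => huncorr j k (mem_Icc.mp hj).1 (mem_Icc.mp hk).1)
          fun k _ => Nat.card_filter_ordCompl_two_eq_le n _
    _ = _ := by simp

/-- Law of large numbers for multiple averages under the product-of-Markov measure `ℙ_s`:
for a uniformly bounded sequence `(F_n)` of functions on `S × S`,
`(1/n) ∑_{k=1}^n (F_k(x_k, x_{2k}) - 𝔼[F_k(x_k, x_{2k})]) → 0` for `ℙ_s`-a.e. `x`.
Here `ℙ_s` is characterized by its cylinder values: an independent copy of the Markov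
measure with initial law `π(i) = t_i/∑_j t_j` and transitions
`p_{i,j} = e^{sφ(i,j)} t_j/t_i²` on each dyadic block `Λ_i = {i·2^k}`, `i` odd. -/
theorem lln_multiple_averages_product_markov
    (m : ℕ) (hm : 2 ≤ m) (φ : Fin m → Fin m → ℝ) (s : ℝ)
    (t : Fin m → ℝ) (ht : ∀ i, 0 < t i)
    (heq : ∀ i, (t i) ^ 2 = ∑ j, Real.exp (s * φ i j) * t j)
    (Ps : Measure (ℕ → Fin m)) (hprob : IsProbabilityMeasure Ps)
    (hPs : ∀ (n : ℕ) (a : ℕ → Fin m),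
      Ps {x | ∀ k ∈ Icc 1 n, x k = a k} = ENNReal.ofReal
        (∏ i ∈ (Icc 1 n).filter (fun i => Odd i),
          ((t (a i) / ∑ j, t j) *
            ∏ j ∈ (Finset.range (n + 1)).filter (fun j => i * 2 ^ (j + 1) ≤ n),
              Real.exp (s * φ (a (i * 2 ^ j)) (a (i * 2 ^ (j + 1)))) *
                t (a (i * 2 ^ (j + 1))) / (t (a (i * 2 ^ j))) ^ 2)))
    (F : ℕ → Fin m → Fin m → ℝ) (C : ℝ)
    (hF : ∀ n a b, |F n a b| ≤ C) :
    ∀ᵐ x ∂Ps, Tendsto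
      (fun n : ℕ => (n : ℝ)⁻¹ * ∑ k ∈ Icc 1 n,
        (F k (x k) (x (2 * k)) - ∫ y, F k (y k) (y (2 * k)) ∂Ps))
      atTop (nhds 0) :=
  lln_multiple_averages_product_markov_general m φ s t ht Ps hprob hPs F C hF
end

section
/- For α outside the interval [P′(−∞), P′(+∞)], the level set E(α) = {x ∈ Σ_m : lim (1/n) Σ_{k=1}^n φ(x_k, x_{2k}) = α} is empty. -/
/-!
With `u s i = log (t s i)` the defining equation reads `2 u_i = log ∑_j exp (s φ(i,j) + u_j)`.
Hölder's inequality together with a maximum principle for this fixed-point equation makes each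
`s ↦ u s i`, and hence `P = log ∑ exp u`, convex. Keeping a single term of the sum gives
`s φ(i,j) + u_j ≤ 2 u_i`; summing it along the pairs `(x_k, x_{2k})`, `k ≤ n`, bounds the sum of `u`
over the first `2n` sites by twice the sum over the first `n` ones minus `n (s α - P(s))`. As these
sums grow at most linearly, `s α ≤ P(s)` for every `s`. Convexity bounds the slopes of `P` by
`P′(+∞)`, so `α ≤ P′(+∞)`; replacing `φ` by `-φ` and `s` by `-s` gives `P′(-∞) ≤ α`.
-/

open Filter Finset Real MeasureTheory

noncomputable def logSumExp {ι : Type*} [Fintype ι] (x : ι → ℝ) : ℝ := log (∑ i, exp (x i))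

section LogSumExp

variable {ι : Type*} [Fintype ι]

theorem logSumExp_mono : Monotone (logSumExp : (ι → ℝ) → ℝ) := by
  intro x y hxy
  rcases isEmpty_or_nonempty ι with _ | _
  · simp [logSumExp]
  exact log_le_log (sum_pos (fun i _ => exp_pos _) univ_nonempty)
    (sum_le_sum fun i _ => exp_le_exp.2 (hxy i))

theorem le_logSumExp (x : ι → ℝ) (i : ι) : x i ≤ logSumExp x := by
  rw [logSumExp, le_log_iff_exp_le (sum_pos (fun i _ => exp_pos _) ⟨i, mem_univ i⟩)]
  exact single_le_sum (fun j _ => (exp_pos (x j)).le) (mem_univ i)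

variable [Nonempty ι]

theorem logSumExp_add_const (x : ι → ℝ) (r : ℝ) :
    logSumExp (fun i => x i + r) = logSumExp x + r := by
  simp only [logSumExp, exp_add, ← Finset.sum_mul]
  rw [log_mul (sum_pos (fun i _ => exp_pos _) univ_nonempty).ne' (exp_pos r).ne', log_exp]

theorem sum_exp_sub_logSumExp (x : ι → ℝ) : ∑ i, exp (x i - logSumExp x) = 1 := by
  simp only [exp_sub, ← Finset.sum_div, logSumExp]
  rw [exp_log (sum_pos (fun i _ => exp_pos _) univ_nonempty)]
  exact div_self (sum_pos (fun i _ => exp_pos _) univ_nonempty).ne'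

/-- Hölder's inequality: after normalising `∑ exp x = ∑ exp y = 1` it is the convexity of `exp`,
summed over the terms. -/
theorem convexOn_logSumExp : ConvexOn ℝ Set.univ (logSumExp : (ι → ℝ) → ℝ) := by
  refine ⟨convex_univ, fun x _ y _ a b ha hb hab => ?_⟩
  set x' := fun i => x i - logSumExp x
  set y' := fun i => y i - logSumExp y
  have hshift : a • x + b • y =
      fun i => (a * x' i + b * y' i) + (a * logSumExp x + b * logSumExp y) := by
    ext i; simp only [Pi.add_apply, Pi.smul_apply, smul_eq_mul, x', y']; ring
  have hnormal : logSumExp (fun i => a * x' i + b * y' i) ≤ 0 := by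
    refine log_nonpos (sum_nonneg fun i _ => (exp_pos _).le) ?_
    calc ∑ i, exp (a * x' i + b * y' i) ≤ ∑ i, (a * exp (x' i) + b * exp (y' i)) :=
          sum_le_sum fun i _ => convexOn_exp.2 (Set.mem_univ _) (Set.mem_univ _) ha hb hab
      _ = 1 := by
        rw [sum_add_distrib, ← mul_sum, ← mul_sum, sum_exp_sub_logSumExp,
          sum_exp_sub_logSumExp, mul_one, mul_one, hab]
  rw [hshift, logSumExp_add_const, smul_eq_mul, smul_eq_mul]
  linarith

theorem le_of_two_mul_le_logSumExp_of_logSumExp_le_two_mul {ψ : ι → ι → ℝ} {u v : ι → ℝ}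
    (hu : ∀ i, 2 * u i ≤ logSumExp (fun j => ψ i j + u j))
    (hv : ∀ i, logSumExp (fun j => ψ i j + v j) ≤ 2 * v i) : u ≤ v := by
  obtain ⟨i₀, hi₀⟩ : ∃ i₀, ∀ j, u j - v j ≤ u i₀ - v i₀ := Finite.exists_max _
  have hmax : 2 * u i₀ ≤ 2 * v i₀ + (u i₀ - v i₀) :=
    calc 2 * u i₀ ≤ logSumExp (fun j => ψ i₀ j + u j) := hu i₀
      _ ≤ logSumExp (fun j => ψ i₀ j + v j + (u i₀ - v i₀)) :=
        logSumExp_mono fun j => by linarith [hi₀ j]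
      _ ≤ 2 * v i₀ + (u i₀ - v i₀) := by rw [logSumExp_add_const]; linarith [hv i₀]
  intro i
  linarith [hi₀ i]

theorem ConvexOn.logSumExp_comp {E : Type*} [AddCommGroup E] [Module ℝ E] {s : Set E}
    {f : E → ι → ℝ} (hf : ∀ i, ConvexOn ℝ s (f · i)) :
    ConvexOn ℝ s (fun z => logSumExp (f z)) := by
  refine ⟨(hf (Classical.arbitrary ι)).1, fun x hx y hy a b ha hb hab => ?_⟩
  calc logSumExp (f (a • x + b • y)) ≤ logSumExp (a • f x + b • f y) :=
        logSumExp_mono fun i => by simpa using (hf i).2 hx hy ha hb hab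
    _ ≤ a • logSumExp (f x) + b • logSumExp (f y) :=
        convexOn_logSumExp.2 (Set.mem_univ _) (Set.mem_univ _) ha hb hab

theorem convexOn_of_two_mul_eq_logSumExp {φ : ι → ι → ℝ} {u : ℝ → ι → ℝ}
    (hu : ∀ s i, 2 * u s i = logSumExp (fun j => s * φ i j + u s j)) (i : ι) :
    ConvexOn ℝ Set.univ (u · i) := by
  refine ⟨convex_univ, fun a _ b _ μ ν hμ hν hμν => ?_⟩
  have hsuper : ∀ k, logSumExp (fun j => (μ • a + ν • b) * φ k j + (μ * u a j + ν * u b j))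
      ≤ 2 * (μ * u a k + ν * u b k) := by
    intro k
    have hlin : (fun j => (μ • a + ν • b) * φ k j + (μ * u a j + ν * u b j)) =
        μ • (fun j => a * φ k j + u a j) + ν • (fun j => b * φ k j + u b j) := by
      ext j; simp only [Pi.add_apply, Pi.smul_apply, smul_eq_mul]; ring
    rw [hlin]
    refine (convexOn_logSumExp.2 (Set.mem_univ _) (Set.mem_univ _) hμ hν hμν).trans_eq ?_
    rw [smul_eq_mul, smul_eq_mul, ← hu, ← hu]
    ring
  exact le_of_two_mul_le_logSumExp_of_logSumExp_le_two_mul (fun k => (hu _ k).le) hsuper i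

end LogSumExp

theorem sum_Icc_one_two_mul {M : Type*} [AddCommMonoid M] (g : ℕ → M) (n : ℕ) :
    ∑ k ∈ Icc 1 (2 * n), g k = ∑ k ∈ Icc 1 n, (g (2 * k - 1) + g (2 * k)) := by
  induction n with
  | zero => simp
  | succ n ih =>
    rw [show 2 * (n + 1) = 2 * n + 1 + 1 by ring, sum_Icc_succ_top (by omega),
      sum_Icc_succ_top (by omega), ih, sum_Icc_succ_top (by omega), add_assoc]
    rfl

/-- Along `n = 2ʲ N` the ratio `f n / n` would drop by `ρ / 4` at each step if `ρ < 0`. -/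
theorem nonneg_of_le_two_mul_add {f r : ℕ → ℝ} {C ρ : ℝ} (hf : ∀ n, C * n ≤ f n)
    (hdouble : ∀ᶠ n in atTop, f (2 * n) ≤ 2 * f n + n * r n)
    (hr : Tendsto r atTop (nhds ρ)) : 0 ≤ ρ := by
  by_contra! hρ
  have hev : ∀ᶠ n in atTop, 0 < n ∧ f (2 * n) ≤ 2 * f n + n * (ρ / 2) := by
    filter_upwards [hdouble, hr.eventually (gt_mem_nhds (by linarith : ρ < ρ / 2)),
      eventually_gt_atTop 0] with n hn hrn hpos
    exact ⟨hpos, hn.trans (by gcongr)⟩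
  obtain ⟨N, hN⟩ := eventually_atTop.1 hev
  have hiter (j : ℕ) : f (2 ^ j * N) ≤ 2 ^ j * (f N + j * (N * ρ / 4)) := by
    induction j with
    | zero => simp
    | succ j ih =>
      have h := (hN (2 ^ j * N) (Nat.le_mul_of_pos_left N (by positivity))).2
      rw [pow_succ, mul_comm _ 2, mul_assoc]
      push_cast at h ⊢
      calc f (2 * (2 ^ j * N)) ≤ 2 * (2 ^ j * (f N + j * (N * ρ / 4))) + 2 ^ j * N * (ρ / 2) := by
            linarith
        _ = 2 ^ (j + 1) * (f N + (j + 1) * (N * ρ / 4)) := by ring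
  have hNpos : (0 : ℝ) < N := by exact_mod_cast (hN N le_rfl).1
  have hstep : 0 < N * -ρ / 4 := by nlinarith
  obtain ⟨j, hj⟩ := exists_nat_gt ((f N - C * N) / (N * -ρ / 4))
  rw [div_lt_iff₀ hstep] at hj
  have hlow : 2 ^ j * (C * N) ≤ 2 ^ j * (f N + j * (N * ρ / 4)) := by
    have := (hf _).trans (hiter j)
    push_cast at this
    linarith
  have := le_of_mul_le_mul_left hlow (by positivity)
  linarith

theorem le_of_tendsto_average {ι : Type*} [Finite ι] {ψ : ι → ι → ℝ} {u : ι → ℝ} {p β : ℝ}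
    (hedge : ∀ i j, ψ i j + u j ≤ 2 * u i) (hp : ∀ i, u i ≤ p) {x : ℕ → ι}
    (hx : Tendsto (fun n : ℕ => (n : ℝ)⁻¹ * ∑ k ∈ Icc 1 n, ψ (x k) (x (2 * k))) atTop (nhds β)) :
    β ≤ p := by
  have : Nonempty ι := ⟨x 0⟩
  obtain ⟨c, hc⟩ := Finite.exists_ge u
  set F : ℕ → ℝ := fun n => ∑ k ∈ Icc 1 n, u (x k)
  set S : ℕ → ℝ := fun n => ∑ k ∈ Icc 1 n, ψ (x k) (x (2 * k))
  have hlow (n : ℕ) : c * n ≤ F n := by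
    simpa [mul_comm] using card_nsmul_le_sum (Icc 1 n) (fun k => u (x k)) c fun k _ => hc _
  have hdouble (n : ℕ) (hn : n ≠ 0) : F (2 * n) ≤ 2 * F n + n * (p - (n : ℝ)⁻¹ * S n) := by
    have hsplit : F (2 * n) ≤ ∑ k ∈ Icc 1 n, (p + (2 * u (x k) - ψ (x k) (x (2 * k)))) :=
      (sum_Icc_one_two_mul _ n).trans_le <| sum_le_sum fun k _ =>
        add_le_add (hp _) (by linarith [hedge (x k) (x (2 * k))])
    have hn' : (n : ℝ) ≠ 0 := Nat.cast_ne_zero.2 hn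
    simp only [sum_add_distrib, sum_sub_distrib, sum_const, Nat.card_Icc, ← mul_sum,
      nsmul_eq_mul] at hsplit
    rw [mul_sub, ← mul_assoc, mul_inv_cancel₀ hn', one_mul]
    push_cast at hsplit
    linarith
  have := nonneg_of_le_two_mul_add hlow
    ((eventually_ne_atTop 0).mono hdouble) (tendsto_const_nhds.sub hx)
  linarith

theorem ConvexOn.exists_differentiableAt_mem_Ioo {f : ℝ → ℝ} (hf : ConvexOn ℝ Set.univ f)
    {a b : ℝ} (hab : a < b) : ∃ c ∈ Set.Ioo a b, DifferentiableAt ℝ f c := by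
  obtain ⟨K, hK⟩ := hf.locallyLipschitz.locallyLipschitzOn.exists_lipschitzOnWith_of_compact
    (isCompact_Icc (a := a) (b := b))
  have hnull := ae_iff.1
    ((hK.mono Set.Ioo_subset_Icc_self).ae_differentiableWithinAt_of_mem (μ := volume))
  by_contra! hnone
  have hsub : Set.Ioo a b ⊆ {x | ¬(x ∈ Set.Ioo a b → DifferentiableWithinAt ℝ f (Set.Ioo a b) x)} :=
    fun x hx h => hnone x hx ((h hx).differentiableAt (Ioo_mem_nhds hx.1 hx.2))
  exact hab.not_ge (by simpa using measure_mono_null hsub hnull)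

theorem ConvexOn.slope_le_of_tendsto_deriv_atTop {f : ℝ → ℝ} (hf : ConvexOn ℝ Set.univ f) {l : ℝ}
    (hl : Tendsto (deriv f) atTop (nhds l)) {a b : ℝ} (hab : a < b) : slope f a b ≤ l := by
  by_contra! hlt
  obtain ⟨M, hM⟩ := eventually_atTop.1 (hl.eventually (gt_mem_nhds hlt))
  obtain ⟨c, hc, hdiff⟩ := hf.exists_differentiableAt_mem_Ioo (lt_add_one (max b M))
  have hbc : b < c := (le_max_left b M).trans_lt hc.1
  have := hf.slope_mono (Set.mem_univ a) ⟨Set.mem_univ b, hab.ne'⟩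
    ⟨Set.mem_univ c, (hab.trans hbc).ne'⟩ hbc.le
  have := hf.slope_le_deriv (Set.mem_univ a) (Set.mem_univ c) (hab.trans hbc) hdiff
  linarith [hM c ((le_max_right b M).trans hc.1.le)]

theorem ConvexOn.le_of_mul_le_of_tendsto_deriv_atTop {f : ℝ → ℝ} (hf : ConvexOn ℝ Set.univ f)
    {l α : ℝ} (hl : Tendsto (deriv f) atTop (nhds l)) (hα : ∀ s, 0 < s → s * α ≤ f s) : α ≤ l := by
  have hlim : Tendsto (fun s => f 0 / s + l) atTop (nhds l) := by
    simpa using (tendsto_const_nhds.div_atTop tendsto_id).add_const l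
  refine ge_of_tendsto hlim ((eventually_gt_atTop 0).mono fun s hs => ?_)
  have hslope := hf.slope_le_of_tendsto_deriv_atTop hl hs
  rw [slope_def_field, sub_zero, div_le_iff₀ hs] at hslope
  rw [div_add' _ _ _ hs.ne', le_div_iff₀ hs]
  linarith [hα s hs]

theorem le_of_tendsto_deriv_pressure {ι : Type*} [Fintype ι] (φ : ι → ι → ℝ) (t : ℝ → ι → ℝ)
    (ht : ∀ s i, 0 < t s i) (heq : ∀ s i, (t s i) ^ 2 = ∑ j, exp (s * φ i j) * t s j)
    (P : ℝ → ℝ) (hP : ∀ s, P s = log (∑ i, t s i)) {Pp : ℝ}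
    (hPp : Tendsto (deriv P) atTop (nhds Pp)) {x : ℕ → ι} {α : ℝ}
    (hx : Tendsto (fun n : ℕ => (n : ℝ)⁻¹ * ∑ k ∈ Icc 1 n, φ (x k) (x (2 * k))) atTop (nhds α)) :
    α ≤ Pp := by
  have : Nonempty ι := ⟨x 0⟩
  set u : ℝ → ι → ℝ := fun s i => log (t s i)
  have hexp (s : ℝ) (i : ι) : exp (u s i) = t s i := exp_log (ht s i)
  have hu (s : ℝ) (i : ι) : 2 * u s i = logSumExp (fun j => s * φ i j + u s j) := by
    simp only [logSumExp, exp_add, hexp, ← heq, log_pow, u]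
    push_cast
    ring
  have hPu : P = fun s => logSumExp (u s) := funext fun s => by simp only [hP, logSumExp, hexp]
  have hconv : ConvexOn ℝ Set.univ P :=
    hPu ▸ ConvexOn.logSumExp_comp (convexOn_of_two_mul_eq_logSumExp hu)
  refine hconv.le_of_mul_le_of_tendsto_deriv_atTop hPp fun s _ => ?_
  rw [hPu]
  refine le_of_tendsto_average (ψ := fun i j => s * φ i j) (x := x)
    (fun i j => (le_logSumExp _ j).trans_eq (hu s i).symm) (le_logSumExp (u s)) ?_
  simpa [mul_sum, mul_left_comm] using hx.const_mul s

theorem level_set_empty_outside_interval_general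
    (m : ℕ) (φ : Fin m → Fin m → ℝ)
    (t : ℝ → Fin m → ℝ) (ht : ∀ s i, 0 < t s i)
    (heq : ∀ s i, (t s i) ^ 2 = ∑ j, Real.exp (s * φ i j) * t s j)
    (P : ℝ → ℝ) (hP : ∀ s, P s = Real.log (∑ i, t s i))
    (Pm Pp : ℝ)
    (hPm : Tendsto (deriv P) atBot (nhds Pm))
    (hPp : Tendsto (deriv P) atTop (nhds Pp))
    (α : ℝ) (hα : α ∉ Set.Icc Pm Pp) :
    {x : ℕ → Fin m | Tendsto
      (fun n : ℕ => (n : ℝ)⁻¹ * ∑ k ∈ Icc 1 n, φ (x k) (x (2 * k)))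
      atTop (nhds α)} = ∅ := by
  refine Set.eq_empty_of_forall_notMem fun x hx =>
    hα ⟨?_, le_of_tendsto_deriv_pressure φ t ht heq P hP hPp hx⟩
  -- `P′(-∞) ≤ α` is the upper bound for the system `(-φ, t ∘ Neg.neg)` and the level `-α`.
  have := le_of_tendsto_deriv_pressure (fun i j => -φ i j) (fun s => t (-s)) (fun s => ht (-s))
    (fun s i => by simpa only [mul_neg, neg_mul] using heq (-s) i) (fun s => P (-s))
    (fun s => hP (-s)) (Pp := -Pm)
    (by
      rw [show deriv (fun s => P (-s)) = fun s => -deriv P (-s) from funext (deriv_comp_neg P)]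
      exact (hPm.comp tendsto_neg_atTop_atBot).neg)
    (α := -α) (by simpa only [sum_neg_distrib, mul_neg] using hx.neg)
  linarith

/-- If `α` lies outside `[P′(-∞), P′(+∞)]`, where `P(s) = log ∑_i t_i(s)` is the pressure of
the nonlinear transfer system, then the level set
`E(α) = {x : lim (1/n) ∑_{k=1}^n φ(x_k, x_{2k}) = α}` is empty. -/
theorem level_set_empty_outside_interval
    (m : ℕ) (hm : 2 ≤ m) (φ : Fin m → Fin m → ℝ)
    (hφ : ∃ i j k l, φ i j ≠ φ k l)
    (t : ℝ → Fin m → ℝ) (ht : ∀ s i, 0 < t s i)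
    (heq : ∀ s i, (t s i) ^ 2 = ∑ j, Real.exp (s * φ i j) * t s j)
    (P : ℝ → ℝ) (hP : ∀ s, P s = Real.log (∑ i, t s i))
    (Pm Pp : ℝ)
    (hPm : Tendsto (deriv P) atBot (nhds Pm))
    (hPp : Tendsto (deriv P) atTop (nhds Pp))
    (α : ℝ) (hα : α ∉ Set.Icc Pm Pp) :
    {x : ℕ → Fin m | Tendsto
      (fun n : ℕ => (n : ℝ)⁻¹ * ∑ k ∈ Icc 1 n, φ (x k) (x (2 * k)))
      atTop (nhds α)} = ∅ :=
  level_set_empty_outside_interval_general m φ t ht heq P hP Pm Pp hPm hPp α hα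
end

section
/- α_min = P′(−∞) holds if and only if there exist i₀, i₁, ..., i_ℓ ∈ S (ℓ ≥ 1) with i₀ = i_ℓ such that φ(i_k, i_{k+1}) = α_min for all 0 ≤ k < ℓ; i.e., the minimum value of φ is attained along a cycle in S. -/
/-!
Let `β` solve the discounted min-plus equation `2 β i = min_j (φ i j + β j)`. Then `e^{s β}`
and `card S · e^{s β}` are a sub- and a supersolution of `t_i² = Σ_j e^{s φ(i,j)} t_j` for
`s ≤ 0`, and a maximum principle squeezes `t_s` between them. Hence `P s = (min β) s + O(1)` as
`s → -∞`. By Hölder's inequality the geometric interpolation of two solutions is again a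
supersolution, so `P` is convex, and a convex function with this asymptote has
`P′(-∞) = min β`.

It remains to compare `min β` with `α_min`. The equation gives `α_min ≤ min β`, with equality
exactly when every minimiser of `β` has an `α_min`-edge to another minimiser, and then following
such edges produces an `α_min`-cycle by pigeonhole; conversely, summing the equation along an
`α_min`-cycle telescopes to `min β ≤ α_min`.
-/

open Filter Finset Real Topology MeasureTheory

variable {ι : Type*}

lemma abs_ciInf_sub_ciInf_le [Finite ι] [Nonempty ι] {f g : ι → ℝ} {c : ℝ}
    (h : ∀ i, |f i - g i| ≤ c) : |(⨅ i, f i) - ⨅ i, g i| ≤ c := by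
  have key : ∀ f g : ι → ℝ, (∀ i, |f i - g i| ≤ c) → (⨅ i, f i) - ⨅ i, g i ≤ c := by
    intro f g h
    refine sub_le_comm.1 (le_ciInf fun i => ?_)
    have := (abs_le.1 (h i)).2
    linarith [ciInf_le (Set.finite_range f).bddBelow i]
  exact abs_sub_le_iff.2 ⟨key f g h, key g f fun i => abs_sub_comm (f i) (g i) ▸ h i⟩

variable [Fintype ι]

/- Maximum principle: at a maximiser of `u / v` the maximal ratio `r` satisfies `r² ≤ r`. -/
lemma le_of_sq_le_sum_of_sum_le_sq_s18 {a : ι → ι → ℝ} (ha : ∀ i j, 0 ≤ a i j)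
    {u v : ι → ℝ} (hv : ∀ i, 0 < v i) (hu : ∀ i, u i ^ 2 ≤ ∑ j, a i j * u j)
    (hv' : ∀ i, ∑ j, a i j * v j ≤ v i ^ 2) : u ≤ v := by
  intro i
  have : Nonempty ι := ⟨i⟩
  obtain ⟨k, hk⟩ := Finite.exists_max fun j => u j / v j
  set r := u k / v k
  have hle : ∀ j, u j ≤ r * v j := fun j => (div_le_iff₀ (hv j)).1 (hk j)
  suffices r ≤ 1 by nlinarith [hle i, hv i]
  by_contra! hr
  have huk : u k = r * v k := (div_mul_cancel₀ _ (hv k).ne').symm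
  have : r * (r * v k ^ 2) ≤ r * v k ^ 2 := calc
    r * (r * v k ^ 2) = u k ^ 2 := by rw [huk]; ring
    _ ≤ ∑ j, a k j * u j := hu k
    _ ≤ ∑ j, a k j * (r * v j) := by gcongr with j; exacts [ha k j, hle j]
    _ = r * ∑ j, a k j * v j := by rw [mul_sum]; exact sum_congr rfl fun j _ => by ring
    _ ≤ r * v k ^ 2 := mul_le_mul_of_nonneg_left (hv' k) (by linarith)
  nlinarith [mul_pos (by linarith : (0 : ℝ) < r) (pow_pos (hv k) 2)]

lemma sum_rpow_mul_rpow_le_s18 {A B : ι → ℝ} (hA : ∀ i, 0 ≤ A i) (hB : ∀ i, 0 ≤ B i)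
    {a b : ℝ} (ha : 0 < a) (hb : 0 < b) (hab : a + b = 1) :
    ∑ i, A i ^ a * B i ^ b ≤ (∑ i, A i) ^ a * (∑ i, B i) ^ b := by
  have := inner_le_Lp_mul_Lq_of_nonneg univ (HolderConjugate.inv_inv ha hb hab)
    (f := fun i => A i ^ a) (g := fun i => B i ^ b) (fun i _ => rpow_nonneg (hA i) a)
    (fun i _ => rpow_nonneg (hB i) b)
  simpa [rpow_rpow_inv, hA, hB, ha.ne', hb.ne'] using this

def IsBellmanSolution (φ : ι → ι → ℝ) (β : ι → ℝ) : Prop :=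
  ∀ i, 2 * β i = ⨅ j, φ i j + β j

lemma exists_isBellmanSolution [Nonempty ι] (φ : ι → ι → ℝ) : ∃ β, IsBellmanSolution φ β := by
  let T : (ι → ℝ) → ι → ℝ := fun β i => (⨅ j, φ i j + β j) / 2
  have hT : ContractingWith (1 / 2) T := by
    refine ⟨by rw [← NNReal.coe_lt_coe]; norm_num, LipschitzWith.of_dist_le_mul fun β γ => ?_⟩
    refine (dist_pi_le_iff (by positivity)).2 fun i => ?_
    have hβγ : ∀ j, |(φ i j + β j) - (φ i j + γ j)| ≤ dist β γ := fun j => by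
      simpa [Real.dist_eq] using dist_le_pi_dist β γ j
    rw [Real.dist_eq, ← sub_div, abs_div, abs_two]
    push_cast
    linarith [abs_ciInf_sub_ciInf_le hβγ]
  refine ⟨ContractingWith.fixedPoint T hT, fun i => ?_⟩
  have := congrFun (ContractingWith.fixedPoint_isFixedPt (f := T) hT) i
  simp only [T] at this
  linarith

structure IsTransferSolution (φ : ι → ι → ℝ) (s : ℝ) (u : ι → ℝ) : Prop where
  pos : ∀ i, 0 < u i
  sq_eq : ∀ i, u i ^ 2 = ∑ j, exp (s * φ i j) * u j

namespace IsTransferSolution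

variable {φ : ι → ι → ℝ} {β : ι → ℝ} {s : ℝ} {u : ι → ℝ}

lemma exp_mul_le (hu : IsTransferSolution φ s u) (hβ : IsBellmanSolution φ β) (i : ι) :
    exp (s * β i) ≤ u i := by
  refine le_of_sq_le_sum_of_sum_le_sq_s18 (u := fun i => exp (s * β i)) (fun _ _ => (exp_pos _).le)
    hu.pos (fun i => ?_) (fun i => (hu.sq_eq i).ge) i
  have : Nonempty ι := ⟨i⟩
  obtain ⟨j, hj⟩ := exists_eq_ciInf_of_finite (f := fun j => φ i j + β j)
  calc exp (s * β i) ^ 2 = exp (s * φ i j) * exp (s * β j) := by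
        rw [← exp_nat_mul, ← exp_add]; congr 1; linear_combination s * (hβ i).trans hj.symm
    _ ≤ ∑ j, exp (s * φ i j) * exp (s * β j) :=
        single_le_sum (f := fun j => exp (s * φ i j) * exp (s * β j))
          (fun _ _ => by positivity) (mem_univ j)

lemma le_card_mul_exp_mul (hu : IsTransferSolution φ s u) (hβ : IsBellmanSolution φ β)
    (hs : s ≤ 0) (i : ι) : u i ≤ Fintype.card ι * exp (s * β i) := by
  have : Nonempty ι := ⟨i⟩
  refine le_of_sq_le_sum_of_sum_le_sq_s18 (v := fun i => Fintype.card ι * exp (s * β i))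
    (fun _ _ => (exp_pos _).le) (fun i => by positivity) (fun i => (hu.sq_eq i).le)
    (fun i => ?_) i
  calc ∑ j, exp (s * φ i j) * (Fintype.card ι * exp (s * β j))
      ≤ ∑ _j : ι, Fintype.card ι * exp (s * (2 * β i)) := by
        refine sum_le_sum fun j _ => ?_
        have : 2 * β i ≤ φ i j + β j := (hβ i).trans_le (ciInf_le (Set.finite_range _).bddBelow j)
        rw [mul_left_comm, ← exp_add, ← mul_add]
        exact mul_le_mul_of_nonneg_left (exp_le_exp.2 (mul_le_mul_of_nonpos_left this hs))
          (Nat.cast_nonneg _)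
    _ = (Fintype.card ι * exp (s * β i)) ^ 2 := by
        rw [sum_const, card_univ, nsmul_eq_mul, mul_pow, ← exp_nat_mul]
        push_cast
        ring_nf

lemma log_sum_bounds [Nonempty ι] (hu : IsTransferSolution φ s u) (hβ : IsBellmanSolution φ β)
    (hs : s ≤ 0) :
    (⨅ i, β i) * s ≤ log (∑ i, u i) ∧
      log (∑ i, u i) ≤ (⨅ i, β i) * s + 2 * log (Fintype.card ι) := by
  obtain ⟨k, hk⟩ := exists_eq_ciInf_of_finite (f := β)
  have hβk : ∀ i, s * β i ≤ s * β k := fun i =>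
    mul_le_mul_of_nonpos_left (hk ▸ ciInf_le (Set.finite_range _).bddBelow i) hs
  have hcard : (0 : ℝ) < Fintype.card ι := by exact_mod_cast Fintype.card_pos
  have hsum : 0 < ∑ i, u i := sum_pos (fun i _ => hu.pos i) univ_nonempty
  rw [← hk]
  constructor
  · rw [le_log_iff_exp_le hsum, mul_comm (β k)]
    exact (hu.exp_mul_le hβ k).trans
      (single_le_sum (fun i _ => (hu.pos i).le) (mem_univ k))
  · rw [log_le_iff_le_exp hsum, exp_add, mul_comm (β k), ← log_rpow hcard,
      exp_log (by positivity)]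
    calc ∑ i, u i ≤ ∑ _i : ι, Fintype.card ι * exp (s * β k) :=
          sum_le_sum fun i _ => (hu.le_card_mul_exp_mul hβ hs i).trans
            (mul_le_mul_of_nonneg_left (exp_le_exp.2 (hβk i)) (Nat.cast_nonneg _))
      _ = exp (s * β k) * Fintype.card ι ^ (2 : ℝ) := by
          rw [sum_const, card_univ, nsmul_eq_mul, rpow_two]; ring

lemma sum_exp_mul_rpow_mul_rpow_le {x y a b : ℝ} {v : ι → ℝ}
    (hu : IsTransferSolution φ x u) (hv : IsTransferSolution φ y v) (ha : 0 < a) (hb : 0 < b)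
    (hab : a + b = 1) (i : ι) :
    ∑ j, exp ((a * x + b * y) * φ i j) * (u j ^ a * v j ^ b) ≤ (u i ^ a * v i ^ b) ^ 2 := calc
  _ = ∑ j, (exp (x * φ i j) * u j) ^ a * (exp (y * φ i j) * v j) ^ b := by
      refine sum_congr rfl fun j _ => ?_
      rw [mul_rpow (exp_pos _).le (hu.pos j).le, mul_rpow (exp_pos _).le (hv.pos j).le,
        ← exp_mul, ← exp_mul, add_mul, exp_add]
      ring_nf
  _ ≤ (∑ j, exp (x * φ i j) * u j) ^ a * (∑ j, exp (y * φ i j) * v j) ^ b :=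
      sum_rpow_mul_rpow_le_s18 (fun j => (mul_pos (exp_pos _) (hu.pos j)).le)
        (fun j => (mul_pos (exp_pos _) (hv.pos j)).le) ha hb hab
  _ = (u i ^ a * v i ^ b) ^ 2 := by
      rw [← hu.sq_eq, ← hv.sq_eq, mul_pow, rpow_pow_comm (hu.pos i).le,
        rpow_pow_comm (hv.pos i).le]

end IsTransferSolution

lemma convexOn_log_sum_of_isTransferSolution [Nonempty ι] {φ : ι → ι → ℝ} {t : ℝ → ι → ℝ}
    (ht : ∀ s, IsTransferSolution φ s (t s)) : ConvexOn ℝ Set.univ fun s => log (∑ i, t s i) := by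
  refine convexOn_iff_forall_pos.2 ⟨convex_univ, fun x _ y _ a b ha hb hab => ?_⟩
  have hpos : ∀ s, 0 < ∑ i, t s i := fun s =>
    sum_pos (fun i _ => (ht s).pos i) univ_nonempty
  have hle : ∀ i, t (a • x + b • y) i ≤ t x i ^ a * t y i ^ b :=
    le_of_sq_le_sum_of_sum_le_sq_s18 (fun _ _ => (exp_pos _).le)
      (fun i => mul_pos (rpow_pos_of_pos ((ht x).pos i) a) (rpow_pos_of_pos ((ht y).pos i) b))
      (fun i => ((ht _).sq_eq i).le)
      ((ht x).sum_exp_mul_rpow_mul_rpow_le (ht y) ha hb hab)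
  calc log (∑ i, t (a • x + b • y) i)
      ≤ log ((∑ i, t x i) ^ a * (∑ i, t y i) ^ b) :=
        log_le_log (hpos _) ((sum_le_sum fun i _ => hle i).trans
          (sum_rpow_mul_rpow_le_s18 (fun i => ((ht x).pos i).le) (fun i => ((ht y).pos i).le)
            ha hb hab))
    _ = a • log (∑ i, t x i) + b • log (∑ i, t y i) := by
        rw [log_mul (rpow_pos_of_pos (hpos x) a).ne' (rpow_pos_of_pos (hpos y) b).ne',
          log_rpow (hpos x), log_rpow (hpos y), smul_eq_mul, smul_eq_mul]

lemma frequently_atBot_of_ae {p : ℝ → Prop} (h : ∀ᵐ x, p x) : ∃ᶠ x in atBot, p x := by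
  refine frequently_atBot.2 fun a => ?_
  have : (ae (volume.restrict (Set.Iic a))).NeBot := ae_neBot.2 (by simp)
  exact ((ae_restrict_mem measurableSet_Iic).and (ae_restrict_of_ae h)).exists

namespace ConvexOn

variable {f : ℝ → ℝ} (hf : ConvexOn ℝ Set.univ f)
include hf

lemma ae_differentiableAt : ∀ᵐ x, DifferentiableAt ℝ f x := by
  -- Subtracting a secant slope from the left of `a` makes `f` monotone on `(a, ∞)`.
  have key : ∀ a : ℝ, ∀ᵐ x, a < x → DifferentiableAt ℝ f x := by
    intro a
    set L := (f a - f (a - 1)) / (a - (a - 1))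
    have hmono : MonotoneOn (fun x => f x - L * x) (Set.Ioi a) := by
      intro x (hx : a < x) y _ hxy
      rcases hxy.eq_or_lt with rfl | hxy
      · rfl
      have h1 := hf.slope_mono_adjacent (Set.mem_univ (a - 1)) (Set.mem_univ x) (by linarith) hx
      have h2 := hf.slope_mono_adjacent (Set.mem_univ a) (Set.mem_univ y) hx hxy
      have : L * (y - x) ≤ f y - f x := (le_div_iff₀ (sub_pos.2 hxy)).1 (h1.trans h2)
      dsimp only
      linarith
    filter_upwards [hmono.ae_differentiableWithinAt_of_mem] with x hx hax
    simpa using ((hx hax).differentiableAt (Ioi_mem_nhds hax)).fun_add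
      (differentiableAt_id.const_mul L)
  filter_upwards [ae_all_iff.2 fun n : ℕ => key (-n)] with x hx
  obtain ⟨n, hn⟩ := exists_nat_gt (-x)
  exact hx n (by linarith)

variable {b C : ℝ} (hbnd : ∀ s ≤ 0, b * s ≤ f s ∧ f s ≤ b * s + C)
include hbnd

lemma abs_deriv_sub_le {s : ℝ} (hs : s < 0) (hd : DifferentiableAt ℝ f s) :
    |deriv f s - b| ≤ C / -s := by
  have hupper := hf.deriv_le_slope (Set.mem_univ s) (Set.mem_univ 0) hs hd
  have hlower := hf.slope_le_deriv (Set.mem_univ (2 * s)) (Set.mem_univ s) (by linarith) hd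
  rw [slope_def_field, le_div_iff₀ (by linarith)] at hupper
  rw [slope_def_field, div_le_iff₀ (by linarith)] at hlower
  have h0 := (hbnd 0 le_rfl).2
  have h1 := (hbnd s hs.le).1
  have h2 := (hbnd (2 * s) (by linarith)).2
  rw [abs_sub_le_iff, le_div_iff₀ (by linarith), le_div_iff₀ (by linarith)]
  constructor <;> nlinarith

lemma eq_of_tendsto_deriv_atBot {L : ℝ} (hL : Tendsto (deriv f) atBot (𝓝 L)) : L = b := by
  -- `deriv f` is the junk value `0` off the differentiability set, so restrict to that set.
  set l := atBot ⊓ 𝓟 {s | DifferentiableAt ℝ f s ∧ s < 0}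
  have : l.NeBot := frequently_iff_neBot.1
    ((frequently_atBot_of_ae hf.ae_differentiableAt).and_eventually (eventually_lt_atBot 0))
  have hC : Tendsto (fun s => C / -s) l (𝓝 0) :=
    (tendsto_const_nhds.div_atTop tendsto_neg_atBot_atTop).mono_left inf_le_left
  have hb : Tendsto (fun s => deriv f s - b) l (𝓝 0) :=
    squeeze_zero_norm' (eventually_inf_principal.2 (.of_forall fun s ⟨hd, hs⟩ =>
      hf.abs_deriv_sub_le hbnd hs hd)) hC
  have hL' : Tendsto (fun s => deriv f s - b) l (𝓝 (L - b)) :=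
    (hL.mono_left inf_le_left).sub_const b
  linarith [tendsto_nhds_unique hL' hb]

end ConvexOn

lemma exists_cycle_of_forall_exists {α : Type*} [Finite α] [Nonempty α] {r : α → α → Prop}
    (h : ∀ i, ∃ j, r i j) :
    ∃ (ℓ : ℕ) (c : ℕ → α), 1 ≤ ℓ ∧ c 0 = c ℓ ∧ ∀ k < ℓ, r (c k) (c (k + 1)) := by
  choose g hg using h
  obtain ⟨i⟩ := ‹Nonempty α›
  obtain ⟨p, q, hpq, hpq'⟩ := Set.finite_univ.exists_lt_map_eq_of_forall_mem
    (f := fun n => g^[n] i) fun _ => Set.mem_univ _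
  refine ⟨q - p, fun k => g^[p + k] i, by omega, by simpa [Nat.add_sub_cancel' hpq.le] using hpq',
    fun k _ => ?_⟩
  simpa only [← add_assoc, Function.iterate_succ_apply'] using hg _

namespace IsBellmanSolution

variable {φ : ι → ι → ℝ} {β : ι → ℝ} (hβ : IsBellmanSolution φ β) {αmin : ℝ}
include hβ

lemma le_iInf [Nonempty ι] (hα : ∀ i j, αmin ≤ φ i j) : αmin ≤ ⨅ i, β i := by
  obtain ⟨k, hk⟩ := exists_eq_ciInf_of_finite (f := β)
  obtain ⟨j, hj⟩ := exists_eq_ciInf_of_finite (f := fun j => φ k j + β j)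
  have := hβ k
  have := hα k j
  linarith [hk ▸ ciInf_le (Set.finite_range β).bddBelow j]

lemma iInf_le_of_cycle {ℓ : ℕ} {c : ℕ → ι} (hℓ : 1 ≤ ℓ) (hc : c 0 = c ℓ)
    (hcyc : ∀ k < ℓ, φ (c k) (c (k + 1)) = αmin) : ⨅ i, β i ≤ αmin := by
  have hstep : ∀ k ∈ range ℓ, β (c k) ≤ αmin + (β (c (k + 1)) - β (c k)) := by
    intro k hk
    have := (hβ (c k)).trans_le (ciInf_le (Set.finite_range _).bddBelow (c (k + 1)))
    rw [hcyc k (mem_range.1 hk)] at this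
    linarith
  obtain ⟨k, -, hk⟩ := exists_le_of_sum_le (nonempty_range_iff.2 (by omega)) <| calc
    ∑ k ∈ range ℓ, β (c k)
        ≤ ∑ k ∈ range ℓ, (αmin + (β (c (k + 1)) - β (c k))) := sum_le_sum hstep
    _ = ∑ _k ∈ range ℓ, αmin := by
        rw [sum_add_distrib, sum_range_sub (fun k => β (c k)), hc, sub_self, add_zero]
  exact (ciInf_le (Set.finite_range β).bddBelow _).trans hk

lemma exists_cycle_of_iInf_eq [Nonempty ι] (hα : ∀ i j, αmin ≤ φ i j) (h : ⨅ i, β i = αmin) :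
    ∃ (ℓ : ℕ) (c : ℕ → ι), 1 ≤ ℓ ∧ c 0 = c ℓ ∧ ∀ k < ℓ, φ (c k) (c (k + 1)) = αmin := by
  have hge : ∀ i, αmin ≤ β i := fun i => h ▸ ciInf_le (Set.finite_range β).bddBelow i
  have : Nonempty {i // β i = αmin} := by
    obtain ⟨k, hk⟩ := exists_eq_ciInf_of_finite (f := β)
    exact ⟨⟨k, hk.trans h⟩⟩
  have hsucc : ∀ i : {i // β i = αmin}, ∃ j : {i // β i = αmin}, φ i j = αmin := by
    rintro ⟨i, hi⟩
    obtain ⟨j, hj⟩ := exists_eq_ciInf_of_finite (f := fun j => φ i j + β j)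
    have := hβ i
    have := hα i j
    have := hge j
    exact ⟨⟨j, by linarith⟩, by dsimp only; linarith⟩
  obtain ⟨ℓ, c, hℓ, hc, hcyc⟩ := exists_cycle_of_forall_exists hsucc
  exact ⟨ℓ, fun k => c k, hℓ, congrArg Subtype.val hc, hcyc⟩

end IsBellmanSolution

theorem alpha_min_eq_deriv_pressure_at_bot_iff_cycle_general
    (m : ℕ) (φ : Fin m → Fin m → ℝ)
    (t : ℝ → Fin m → ℝ) (ht : ∀ s i, 0 < t s i)
    (heq : ∀ s i, (t s i) ^ 2 = ∑ j, Real.exp (s * φ i j) * t s j)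
    (P : ℝ → ℝ) (hP : ∀ s, P s = Real.log (∑ i, t s i))
    (αmin : ℝ) (hαmin : IsLeast (Set.range fun p : Fin m × Fin m => φ p.1 p.2) αmin)
    (Pm : ℝ) (hPm : Tendsto (deriv P) atBot (nhds Pm)) :
    αmin = Pm ↔
      ∃ (ℓ : ℕ) (c : ℕ → Fin m), 1 ≤ ℓ ∧ c 0 = c ℓ ∧
        ∀ k < ℓ, φ (c k) (c (k + 1)) = αmin := by
  obtain ⟨⟨i, -⟩, -⟩ := hαmin.1
  have : Nonempty (Fin m) := ⟨i⟩
  obtain rfl : P = fun s => log (∑ i, t s i) := funext hP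
  have hsol : ∀ s, IsTransferSolution φ s (t s) := fun s => ⟨ht s, heq s⟩
  obtain ⟨β, hβ⟩ := exists_isBellmanSolution φ
  have hPm_eq : Pm = ⨅ i, β i :=
    (convexOn_log_sum_of_isTransferSolution hsol).eq_of_tendsto_deriv_atBot
      (fun s hs => (hsol s).log_sum_bounds hβ hs) hPm
  have hα : ∀ i j, αmin ≤ φ i j := fun i j => hαmin.2 ⟨(i, j), rfl⟩
  rw [hPm_eq]
  exact ⟨fun h => hβ.exists_cycle_of_iInf_eq hα h.symm,
    fun ⟨ℓ, c, hℓ, hc, hcyc⟩ => le_antisymm (hβ.le_iInf hα) (hβ.iInf_le_of_cycle hℓ hc hcyc)⟩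

/-- `α_min = P′(-∞)` if and only if the minimum value `α_min` of `φ` is attained along a
cycle `i₀, i₁, ..., i_ℓ` in `S` (with `i₀ = i_ℓ`, `ℓ ≥ 1`). -/
theorem alpha_min_eq_deriv_pressure_at_bot_iff_cycle
    (m : ℕ) (hm : 2 ≤ m) (φ : Fin m → Fin m → ℝ)
    (hφ : ∃ i j k l, φ i j ≠ φ k l)
    (t : ℝ → Fin m → ℝ) (ht : ∀ s i, 0 < t s i)
    (heq : ∀ s i, (t s i) ^ 2 = ∑ j, Real.exp (s * φ i j) * t s j)
    (P : ℝ → ℝ) (hP : ∀ s, P s = Real.log (∑ i, t s i))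
    (αmin : ℝ) (hαmin : IsLeast (Set.range fun p : Fin m × Fin m => φ p.1 p.2) αmin)
    (Pm : ℝ) (hPm : Tendsto (deriv P) atBot (nhds Pm)) :
    αmin = Pm ↔
      ∃ (ℓ : ℕ) (c : ℕ → Fin m), 1 ≤ ℓ ∧ c 0 = c ℓ ∧
        ∀ k < ℓ, φ (c k) (c (k + 1)) = αmin :=
  alpha_min_eq_deriv_pressure_at_bot_iff_cycle_general m φ t ht heq P hP αmin hαmin Pm hPm
end
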